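/- arXiv:2107.01433 — 6 statements merged into one kernel-verified Lean document; each statement's English description precedes it below -/
import Mathlib

section
/- A feasible point x* of the problem (P) is critical for (P) if and only if there exist c* > 0 and a subgradient tuple V at x* such that for every c ≥ c* the point x* is a global minimiser over A of the convex function Q_c(·, x*, V). -/
open RealInnerProductSpace Finset Filter Topology

noncomputable section

/-- Euclidean space `ℝ^d`. -/
abbrev Euc (d : ℕ) := EuclideanSpace ℝ (Fin d)

/-- The (convex-analysis) subdifferential of `f` at `y`. -/
def subdiff {d : ℕ} (f : Euc d → ℝ) (y : Euc d) : Set (Euc d) :=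
  {v | ∀ x, f y + ⟪v, x - y⟫ ≤ f x}

/-- The normal cone to `A` at `x`. -/
def normalCone {d : ℕ} (A : Set (Euc d)) (x : Euc d) : Set (Euc d) :=
  {v | ∀ y ∈ A, ⟪v, y - x⟫ ≤ 0}

/-- A subgradient tuple `V = (v₀, vᵢ (i ∈ I), vⱼ, wⱼ (j ∈ E))` at the point `y`:
`v_k ∈ ∂h_k(y)` for `k ∈ {0} ∪ I ∪ E` and `w_j ∈ ∂g_j(y)` for `j ∈ E`. -/
structure SubgradTuple {d l p : ℕ} (h0 : Euc d → ℝ) (hI : Fin l → Euc d → ℝ)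
    (gE hE : Fin p → Euc d → ℝ) (y : Euc d) : Type where
  v0 : Euc d
  vI : Fin l → Euc d
  vE : Fin p → Euc d
  wE : Fin p → Euc d
  v0_mem : v0 ∈ subdiff h0 y
  vI_mem : ∀ i, vI i ∈ subdiff (hI i) y
  vE_mem : ∀ j, vE j ∈ subdiff (hE j) y
  wE_mem : ∀ j, wE j ∈ subdiff (gE j) y

variable {d l p : ℕ}

/-- The linearised infeasibility measure `Γ(x, y, V)`. -/
def Gam (gI : Fin l → Euc d → ℝ) {h0 : Euc d → ℝ} {hI : Fin l → Euc d → ℝ}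
    {gE hE : Fin p → Euc d → ℝ} {y : Euc d}
    (V : SubgradTuple h0 hI gE hE y) (x : Euc d) : ℝ :=
  (∑ i, max (gI i x - hI i y - ⟪V.vI i, x - y⟫) 0)
  + ∑ j, max (gE j x - hE j y - ⟪V.vE j, x - y⟫)
      (hE j x - gE j y - ⟪V.wE j, x - y⟫)

/-- The convex majorant `Q_c(x, y, V)` of the penalty function. -/
def Qfun (g0 : Euc d → ℝ) (gI : Fin l → Euc d → ℝ) {h0 : Euc d → ℝ}
    {hI : Fin l → Euc d → ℝ} {gE hE : Fin p → Euc d → ℝ} {y : Euc d}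
    (V : SubgradTuple h0 hI gE hE y) (c : ℝ) (x : Euc d) : ℝ :=
  g0 x - ⟪V.v0, x - y⟫ + c * Gam gI V x

/-- The ℓ1 penalty term `φ`. -/
def phi (gI hI : Fin l → Euc d → ℝ) (gE hE : Fin p → Euc d → ℝ) (x : Euc d) : ℝ :=
  (∑ i, max (gI i x - hI i x) 0) + ∑ j, |gE j x - hE j x|

/-- The ℓ1 penalty function `Φ_c = f₀ + c φ`. -/
def Phi (g0 h0 : Euc d → ℝ) (gI hI : Fin l → Euc d → ℝ) (gE hE : Fin p → Euc d → ℝ)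
    (c : ℝ) (x : Euc d) : ℝ :=
  (g0 x - h0 x) + c * phi gI hI gE hE x

/-- Feasibility for the problem (P). -/
def Feasible (A : Set (Euc d)) (gI hI : Fin l → Euc d → ℝ)
    (gE hE : Fin p → Euc d → ℝ) (x : Euc d) : Prop :=
  x ∈ A ∧ (∀ i, gI i x - hI i x ≤ 0) ∧ (∀ j, gE j x - hE j x = 0)

/-- Criticality for the problem (P) (Definition 1). -/
def IsCritical (A : Set (Euc d)) (g0 h0 : Euc d → ℝ) (gI hI : Fin l → Euc d → ℝ)
    (gE hE : Fin p → Euc d → ℝ) (x : Euc d) : Prop :=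
  ∃ V : SubgradTuple h0 hI gE hE x, ∃ lam : Fin l → ℝ, ∃ mu1 mu2 : Fin p → ℝ,
    (∀ i, 0 ≤ lam i) ∧ (∀ j, 0 ≤ mu1 j) ∧ (∀ j, 0 ≤ mu2 j) ∧
    (∀ i, lam i * (gI i x - hI i x) = 0) ∧
    ∃ u0 ∈ subdiff g0 x, ∃ uI : Fin l → Euc d, (∀ i, uI i ∈ subdiff (gI i) x) ∧
    ∃ uE : Fin p → Euc d, (∀ j, uE j ∈ subdiff (gE j) x) ∧
    ∃ zE : Fin p → Euc d, (∀ j, zE j ∈ subdiff (hE j) x) ∧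
    ∃ ν ∈ normalCone A x,
      (0 : Euc d) = (u0 - V.v0) + (∑ i, lam i • (uI i - V.vI i))
        + (∑ j, mu1 j • (uE j - V.vE j)) - (∑ j, mu2 j • (V.wE j - zE j)) + ν

/-- Generalised criticality for the penalty parameter `c`. -/
def IsGenCritical (A : Set (Euc d)) (g0 h0 : Euc d → ℝ) (gI hI : Fin l → Euc d → ℝ)
    (gE hE : Fin p → Euc d → ℝ) (c : ℝ) (x : Euc d) : Prop :=
  x ∈ A ∧ ∃ V : SubgradTuple h0 hI gE hE x, ∀ z ∈ A, Qfun g0 gI V c x ≤ Qfun g0 gI V c z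

/-- Criticality for the penalty term `φ`. -/
def IsCriticalPen (A : Set (Euc d)) (h0 : Euc d → ℝ) (gI hI : Fin l → Euc d → ℝ)
    (gE hE : Fin p → Euc d → ℝ) (x : Euc d) : Prop :=
  x ∈ A ∧ ∃ V : SubgradTuple h0 hI gE hE x, ∀ z ∈ A, Gam gI V x ≤ Gam gI V z

/-- `F` is coercive on `A`. -/
def CoerciveOn {d : ℕ} (F : Euc d → ℝ) (A : Set (Euc d)) : Prop :=
  ∀ u : ℕ → Euc d, (∀ n, u n ∈ A) → Tendsto (fun n => ‖u n‖) atTop atTop →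
    Tendsto (fun n => F (u n)) atTop atTop

section DD
variable {d : ℕ} {f g : Euc d → ℝ} {x u : Euc d}

/-- difference quotient -/
def quot (f : Euc d → ℝ) (x u : Euc d) (t : ℝ) : ℝ := (f (x + t • u) - f x) / t

lemma convexOn_continuous (hf : ConvexOn ℝ Set.univ f) : Continuous f := by
  rw [← continuousOn_univ]
  exact hf.continuousOn isOpen_univ

lemma quot_monoOn (hf : ConvexOn ℝ Set.univ f) : MonotoneOn (quot f x u) (Set.Ioi 0) := by
  intro s hs t ht hst
  have hs' : (0:ℝ) < s := hs
  have ht' : (0:ℝ) < t := ht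
  rw [quot, quot, div_le_div_iff₀ hs' ht']
  have ha : (0:ℝ) ≤ 1 - s/t := by
    have : s/t ≤ 1 := (div_le_one ht').2 hst
    linarith
  have hb : (0:ℝ) ≤ s/t := by positivity
  have hpt : (1 - s/t) • x + (s/t) • (x + t • u) = x + s • u := by
    match_scalars <;> field_simp <;> ring
  have hcomb := hf.2 (Set.mem_univ x) (Set.mem_univ (x + t • u)) ha hb (by ring)
  rw [hpt] at hcomb
  simp only [smul_eq_mul] at hcomb
  have h3 : ((1 - s/t) * f x + (s/t) * f (x + t • u)) * t = (t - s) * f x + s * f (x + t • u) := by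
    field_simp
  nlinarith [mul_le_mul_of_nonneg_right hcomb ht'.le]

lemma quot_lb (hf : ConvexOn ℝ Set.univ f) {t : ℝ} (ht : 0 < t) :
    f x - f (x - u) ≤ quot f x u t := by
  have ht1 : (0:ℝ) < t + 1 := by linarith
  have hpt : (t/(t+1)) • (x - u) + (1/(t+1)) • (x + t • u) = x := by
    match_scalars <;> field_simp <;> ring
  have hcomb := hf.2 (Set.mem_univ (x - u)) (Set.mem_univ (x + t • u))
    (by positivity : (0:ℝ) ≤ t/(t+1)) (by positivity : (0:ℝ) ≤ 1/(t+1))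
    (by field_simp)
  rw [hpt] at hcomb
  simp only [smul_eq_mul] at hcomb
  rw [quot, le_div_iff₀ ht]
  have h3 := mul_le_mul_of_nonneg_right hcomb ht1.le
  have h4 : (t/(t+1) * f (x - u) + 1/(t+1) * f (x + t • u)) * (t+1)
      = t * f (x - u) + f (x + t • u) := by
    field_simp
  nlinarith

/-- one-sided directional derivative of `f` at `x` in direction `u` -/
def dd (f : Euc d → ℝ) (x u : Euc d) : ℝ := sInf (quot f x u '' Set.Ioi 0)

lemma quot_bddBelow (hf : ConvexOn ℝ Set.univ f) :
    BddBelow (quot f x u '' Set.Ioi 0) := by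
  refine ⟨f x - f (x - u), ?_⟩
  rintro q ⟨t, ht, rfl⟩
  exact quot_lb hf ht

lemma dd_tendsto (hf : ConvexOn ℝ Set.univ f) :
    Filter.Tendsto (quot f x u) (nhdsWithin 0 (Set.Ioi 0)) (nhds (dd f x u)) :=
  MonotoneOn.tendsto_nhdsGT (quot_monoOn hf) (quot_bddBelow hf)

lemma dd_unique (hf : ConvexOn ℝ Set.univ f) {L : ℝ}
    (h : Filter.Tendsto (quot f x u) (nhdsWithin 0 (Set.Ioi 0)) (nhds L)) :
    dd f x u = L :=
  tendsto_nhds_unique (dd_tendsto hf) h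

lemma dd_le_quot (hf : ConvexOn ℝ Set.univ f) {t : ℝ} (ht : 0 < t) :
    dd f x u ≤ quot f x u t :=
  csInf_le (quot_bddBelow hf) ⟨t, ht, rfl⟩

lemma dd_le_sub (hf : ConvexOn ℝ Set.univ f) (z : Euc d) :
    dd f x (z - x) ≤ f z - f x := by
  have := dd_le_quot (f := f) (x := x) (u := z - x) hf one_pos
  simpa [quot] using this

lemma inner_le_dd (hf : ConvexOn ℝ Set.univ f) {v : Euc d} (hv : v ∈ subdiff f x) (u : Euc d) :
    ⟪v, u⟫ ≤ dd f x u := by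
  refine ge_of_tendsto (dd_tendsto hf) ?_
  filter_upwards [self_mem_nhdsWithin] with t ht
  have h := hv (x + t • u)
  rw [add_sub_cancel_left, real_inner_smul_right] at h
  rw [quot, le_div_iff₀ ht]
  linarith [mul_comm t ⟪v, u⟫]

lemma dd_zero (hf : ConvexOn ℝ Set.univ f) : dd f x (0 : Euc d) = 0 := by
  refine dd_unique hf ?_
  have : quot f x (0 : Euc d) = fun _ => (0:ℝ) := by
    funext t; simp [quot]
  rw [this]
  exact tendsto_const_nhds

lemma tendsto_mul_Ioi {c : ℝ} (hc : 0 < c) :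
    Filter.Tendsto (fun t : ℝ => c * t) (nhdsWithin 0 (Set.Ioi 0)) (nhdsWithin 0 (Set.Ioi 0)) := by
  apply tendsto_nhdsWithin_of_tendsto_nhds_of_eventually_within
  · have h : Filter.Tendsto (fun t : ℝ => c * t) (nhds 0) (nhds (c * 0)) :=
      Continuous.tendsto (by continuity) 0
    rw [mul_zero] at h
    exact h.mono_left nhdsWithin_le_nhds
  · filter_upwards [self_mem_nhdsWithin] with t ht
    exact mul_pos hc ht

lemma dd_smul (hf : ConvexOn ℝ Set.univ f) {c : ℝ} (hc : 0 < c) (u : Euc d) :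
    dd f x (c • u) = c * dd f x u := by
  refine dd_unique hf ?_
  have heq : ∀ᶠ t in nhdsWithin (0:ℝ) (Set.Ioi 0),
      c * quot f x u (c * t) = quot f x (c • u) t := by
    filter_upwards [self_mem_nhdsWithin] with t ht
    have ht' : (0:ℝ) < t := ht
    rw [quot, quot, smul_smul, mul_comm t c]
    field_simp
  have h2 : Filter.Tendsto (fun t => c * quot f x u (c * t)) (nhdsWithin 0 (Set.Ioi 0))
      (nhds (c * dd f x u)) :=
    ((dd_tendsto hf).comp (tendsto_mul_Ioi hc)).const_mul c
  exact Filter.Tendsto.congr' heq h2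

lemma dd_smul_nonneg (hf : ConvexOn ℝ Set.univ f) {c : ℝ} (hc : 0 ≤ c) (u : Euc d) :
    dd f x (c • u) = c * dd f x u := by
  rcases hc.lt_or_eq with h | h
  · exact dd_smul hf h u
  · rw [← h, zero_smul, dd_zero hf, zero_mul]

lemma dd_add_le (hf : ConvexOn ℝ Set.univ f) (u v : Euc d) :
    dd f x (u + v) ≤ dd f x u + dd f x v := by
  have key : ∀ᶠ t in nhdsWithin (0:ℝ) (Set.Ioi 0),
      quot f x (u + v) t ≤ quot f x u (2 * t) + quot f x v (2 * t) := by
    filter_upwards [self_mem_nhdsWithin] with t ht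
    have ht' : (0:ℝ) < t := ht
    have hpt : x + t • (u + v) = (1/2 : ℝ) • (x + (2*t) • u) + (1/2 : ℝ) • (x + (2*t) • v) := by
      match_scalars <;> field_simp <;> ring
    have hcomb := hf.2 (Set.mem_univ (x + (2*t) • u)) (Set.mem_univ (x + (2*t) • v))
      (by norm_num : (0:ℝ) ≤ 1/2) (by norm_num : (0:ℝ) ≤ 1/2) (by norm_num)
    rw [← hpt] at hcomb
    simp only [smul_eq_mul] at hcomb
    rw [quot, quot, quot, ← add_div, div_le_div_iff₀ ht' (by linarith : (0:ℝ) < 2*t)]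
    nlinarith
  have h2 : Filter.Tendsto (fun t => quot f x u (2*t) + quot f x v (2*t))
      (nhdsWithin 0 (Set.Ioi 0)) (nhds (dd f x u + dd f x v)) :=
    ((dd_tendsto hf).comp (tendsto_mul_Ioi two_pos)).add
      ((dd_tendsto hf).comp (tendsto_mul_Ioi two_pos))
  exact le_of_tendsto_of_tendsto (dd_tendsto hf) h2 key

lemma dd_convexOn (hf : ConvexOn ℝ Set.univ f) : ConvexOn ℝ Set.univ (dd f x) := by
  refine ⟨convex_univ, fun u _ v _ a b ha hb hab => ?_⟩
  calc dd f x (a • u + b • v) ≤ dd f x (a • u) + dd f x (b • v) := dd_add_le hf _ _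
    _ = a * dd f x u + b * dd f x v := by
        rw [dd_smul_nonneg hf ha, dd_smul_nonneg hf hb]
    _ = a • dd f x u + b • dd f x v := by simp [smul_eq_mul]

lemma dd_continuous (hf : ConvexOn ℝ Set.univ f) : Continuous (dd f x) :=
  convexOn_continuous (dd_convexOn hf)

end DD
section SG
variable {d : ℕ} {f : Euc d → ℝ} {x : Euc d}

lemma subdiff_convex (f : Euc d → ℝ) (x : Euc d) : Convex ℝ (subdiff f x) := by
  intro v hv w hw a b ha hb hab
  intro z
  have h1 := mul_le_mul_of_nonneg_left (hv z) ha
  have h2 := mul_le_mul_of_nonneg_left (hw z) hb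
  have hin : ⟪a • v + b • w, z - x⟫ = a * ⟪v, z - x⟫ + b * ⟪w, z - x⟫ := by
    rw [inner_add_left, real_inner_smul_left, real_inner_smul_left]
  rw [mul_add] at h1 h2
  have hfx : a * f x + b * f x = f x := by rw [← add_mul, hab, one_mul]
  have hfz : a * f z + b * f z = f z := by rw [← add_mul, hab, one_mul]
  rw [hin]
  linarith

lemma subdiff_isClosed (f : Euc d → ℝ) (x : Euc d) : IsClosed (subdiff f x) := by
  have : subdiff f x = ⋂ z, {v : Euc d | f x + ⟪v, z - x⟫ ≤ f z} := by
    ext v; simp [subdiff, Set.mem_iInter]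
  rw [this]
  refine isClosed_iInter fun z => isClosed_le ?_ continuous_const
  exact continuous_const.add (Continuous.inner continuous_id continuous_const)

lemma subdiff_isCompact (hf : ConvexOn ℝ Set.univ f) (x : Euc d) :
    IsCompact (subdiff f x) := by
  have hc := convexOn_continuous hf
  obtain ⟨z0, _, hz0⟩ := (isCompact_closedBall x 1).exists_isMaxOn
    ⟨x, Metric.mem_closedBall_self zero_le_one⟩ hc.continuousOn
  have hxM : f x ≤ f z0 := hz0 (Metric.mem_closedBall_self zero_le_one)
  have hbd : ∀ v ∈ subdiff f x, ‖v‖ ≤ f z0 - f x := by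
    intro v hv
    rcases eq_or_ne v 0 with rfl | hv0
    · simpa using hxM
    · have hn : (0:ℝ) < ‖v‖ := norm_pos_iff.2 hv0
      set u := ‖v‖⁻¹ • v with hu
      have hunorm : ‖u‖ = 1 := by
        rw [hu, norm_smul, norm_inv, norm_norm, inv_mul_cancel₀ hn.ne']
      have hmem : x + u ∈ Metric.closedBall x 1 := by
        simp [Metric.mem_closedBall, dist_eq_norm, hunorm]
      have h := hv (x + u)
      rw [add_sub_cancel_left] at h
      have h2 : f (x + u) ≤ f z0 := hz0 hmem
      have h3 : ⟪v, u⟫ = ‖v‖ := by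
        rw [hu, real_inner_smul_right, real_inner_self_eq_norm_sq]
        field_simp
      linarith [h3 ▸ h]
  refine Metric.isCompact_of_isClosed_isBounded (subdiff_isClosed f x) ?_
  exact isBounded_iff_forall_norm_le.2 ⟨f z0 - f x, hbd⟩

end SG
section ATT
variable {d : ℕ} {f : Euc d → ℝ}

lemma exists_dd_attain (hf : ConvexOn ℝ Set.univ f) (x u : Euc d) :
    ∃ v ∈ subdiff f x, ⟪v, u⟫ = dd f x u := by
  classical
  set N : Euc d → ℝ := dd f x with hN
  have hN0 : N 0 = 0 := dd_zero hf
  have hNsub : ∀ y z : Euc d, N (y + z) ≤ N y + N z := fun y z => dd_add_le hf y z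
  have hNhom : ∀ c : ℝ, 0 < c → ∀ y : Euc d, N (c • y) = c * N y :=
    fun c hc y => dd_smul hf hc y
  have hNpos : ∀ y : Euc d, 0 ≤ N y + N (-y) := by
    intro y
    have := hNsub y (-y)
    rw [add_neg_cancel, hN0] at this
    linarith
  have H : ∀ c : ℝ, c • u = 0 → c • N u = 0 := by
    intro c hc
    rcases smul_eq_zero.1 hc with rfl | hu
    · simp
    · rw [hu, hN0, smul_zero]
  set F := LinearPMap.mkSpanSingleton' (σ := RingHom.id ℝ) u (N u) H with hF
  have hFle : ∀ z : F.domain, F z ≤ N z := by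
    rintro ⟨z, hz⟩
    have hz' : z ∈ Submodule.span ℝ {u} := by
      rwa [hF, LinearPMap.domain_mkSpanSingleton] at hz
    obtain ⟨c, hc⟩ := Submodule.mem_span_singleton.1 hz'
    have hmem : c • u ∈ F.domain := hc ▸ hz
    have heq : (⟨z, hz⟩ : F.domain) = ⟨c • u, hmem⟩ := Subtype.ext hc.symm
    rw [heq, LinearPMap.mkSpanSingleton'_apply]
    simp only [smul_eq_mul, RingHom.id_apply]
    rcases lt_trichotomy c 0 with hneg | rfl | hpos
    · have h1 : c • u = (-c) • (-u) := by module
      rw [h1, hNhom (-c) (by linarith) (-u)]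
      nlinarith [hNpos u]
    · simp [hN0]
    · rw [hNhom c hpos u]
  obtain ⟨g, hg1, hg2⟩ := exists_extension_of_le_sublinear F N hNhom hNsub hFle
  set G : Euc d →L[ℝ] ℝ := LinearMap.toContinuousLinearMap g with hG
  set v := (InnerProductSpace.toDual ℝ (Euc d)).symm G with hv
  have hvz : ∀ z : Euc d, ⟪v, z⟫ = g z := by
    intro z
    rw [hv]
    exact InnerProductSpace.toDual_symm_apply
  refine ⟨v, ?_, ?_⟩
  · intro z
    have h1 : ⟪v, z - x⟫ ≤ N (z - x) := by rw [hvz]; exact hg2 (z - x)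
    have h2 := dd_le_sub hf (x := x) z
    rw [← hN] at h2
    linarith
  · have husp : u ∈ F.domain := by
      rw [hF, LinearPMap.domain_mkSpanSingleton]
      exact Submodule.mem_span_singleton_self u
    have h1 := hg1 ⟨u, husp⟩
    have h2 : F ⟨u, husp⟩ = N u :=
      LinearPMap.mkSpanSingleton'_apply_self u (N u) H husp
    rw [hvz]
    simp only [Submodule.coe_mk] at h1
    rw [h1, h2]

end ATT
section COMB
variable {d : ℕ} {x u : Euc d}

lemma inner_affine_comb {a y z1 z2 : Euc d} {s t : ℝ} (hst : s + t = 1) :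
    ⟪a, (s • z1 + t • z2) - y⟫ = s * ⟪a, z1 - y⟫ + t * ⟪a, z2 - y⟫ := by
  have h : (s • z1 + t • z2) - y = s • (z1 - y) + t • (z2 - y) := by
    have hy : s • y + t • y = y := by rw [← add_smul, hst, one_smul]
    calc (s • z1 + t • z2) - y = (s • z1 + t • z2) - (s • y + t • y) := by rw [hy]
      _ = s • (z1 - y) + t • (z2 - y) := by rw [smul_sub, smul_sub]; abel
  rw [h, inner_add_right, real_inner_smul_right, real_inner_smul_right]

lemma convexOn_affsub {f : Euc d → ℝ} (hf : ConvexOn ℝ Set.univ f) (r : ℝ) (a y : Euc d) :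
    ConvexOn ℝ Set.univ (fun z => f z - r - ⟪a, z - y⟫) := by
  refine ⟨convex_univ, fun z1 _ z2 _ s t hs ht hst => ?_⟩
  have h1 := hf.2 (Set.mem_univ z1) (Set.mem_univ z2) hs ht hst
  have h2 := inner_affine_comb (a := a) (y := y) (z1 := z1) (z2 := z2) hst
  simp only [smul_eq_mul] at *
  have hr : s * r + t * r = r := by rw [← add_mul, hst, one_mul]
  rw [h2]
  linarith

lemma convexOn_max {f g : Euc d → ℝ} (hf : ConvexOn ℝ Set.univ f)
    (hg : ConvexOn ℝ Set.univ g) :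
    ConvexOn ℝ Set.univ (fun z => max (f z) (g z)) := by
  refine ⟨convex_univ, fun z1 _ z2 _ s t hs ht hst => ?_⟩
  have h1 := hf.2 (Set.mem_univ z1) (Set.mem_univ z2) hs ht hst
  have h2 := hg.2 (Set.mem_univ z1) (Set.mem_univ z2) hs ht hst
  simp only [smul_eq_mul] at *
  refine max_le (h1.trans ?_) (h2.trans ?_)
  · have := mul_le_mul_of_nonneg_left (le_max_left (f z1) (g z1)) hs
    have := mul_le_mul_of_nonneg_left (le_max_left (f z2) (g z2)) ht
    linarith
  · have := mul_le_mul_of_nonneg_left (le_max_right (f z1) (g z1)) hs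
    have := mul_le_mul_of_nonneg_left (le_max_right (f z2) (g z2)) ht
    linarith

lemma convexOn_finsum {n : ℕ} {F : Fin n → Euc d → ℝ}
    (h : ∀ i, ConvexOn ℝ Set.univ (F i)) :
    ConvexOn ℝ Set.univ (fun z => ∑ i, F i z) := by
  induction n with
  | zero => simpa using convexOn_const (0:ℝ) convex_univ
  | succ m ih =>
    have : (fun z => ∑ i : Fin (m+1), F i z)
        = fun z => (∑ i : Fin m, F i.succ z) + F 0 z := by
      funext z
      rw [Fin.sum_univ_succ]
      ring
    rw [this]
    exact (ih (fun i => h i.succ)).add (h 0)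

lemma tendsto_quot_add {f g : Euc d → ℝ} {Lf Lg : ℝ}
    (hf : Filter.Tendsto (quot f x u) (nhdsWithin 0 (Set.Ioi 0)) (nhds Lf))
    (hg : Filter.Tendsto (quot g x u) (nhdsWithin 0 (Set.Ioi 0)) (nhds Lg)) :
    Filter.Tendsto (quot (fun z => f z + g z) x u) (nhdsWithin 0 (Set.Ioi 0)) (nhds (Lf + Lg)) := by
  have : quot (fun z => f z + g z) x u = fun t => quot f x u t + quot g x u t := by
    funext t
    simp only [quot]
    ring
  rw [this]
  exact hf.add hg

lemma tendsto_quot_const_mul {f : Euc d → ℝ} {Lf : ℝ} (c : ℝ)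
    (hf : Filter.Tendsto (quot f x u) (nhdsWithin 0 (Set.Ioi 0)) (nhds Lf)) :
    Filter.Tendsto (quot (fun z => c * f z) x u) (nhdsWithin 0 (Set.Ioi 0)) (nhds (c * Lf)) := by
  have : quot (fun z => c * f z) x u = fun t => c * quot f x u t := by
    funext t
    simp only [quot]
    ring
  rw [this]
  exact hf.const_mul c

lemma tendsto_quot_sum {n : ℕ} {F : Fin n → Euc d → ℝ} {L : Fin n → ℝ}
    (h : ∀ i, Filter.Tendsto (quot (F i) x u) (nhdsWithin 0 (Set.Ioi 0)) (nhds (L i))) :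
    Filter.Tendsto (quot (fun z => ∑ i, F i z) x u) (nhdsWithin 0 (Set.Ioi 0))
      (nhds (∑ i, L i)) := by
  have : quot (fun z => ∑ i, F i z) x u = fun t => ∑ i, quot (F i) x u t := by
    funext t
    simp only [quot, ← Finset.sum_div, Finset.sum_sub_distrib]
  rw [this]
  exact tendsto_finset_sum _ (fun i _ => h i)

lemma tendsto_quot_affsub {f : Euc d → ℝ} (hf : ConvexOn ℝ Set.univ f) (r : ℝ) (a y : Euc d) :
    Filter.Tendsto (quot (fun z => f z - r - ⟪a, z - y⟫) x u) (nhdsWithin 0 (Set.Ioi 0))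
      (nhds (dd f x u - ⟪a, u⟫)) := by
  have heq : ∀ᶠ t in nhdsWithin (0:ℝ) (Set.Ioi 0),
      quot f x u t - ⟪a, u⟫ = quot (fun z => f z - r - ⟪a, z - y⟫) x u t := by
    filter_upwards [self_mem_nhdsWithin] with t ht
    have ht' : (0:ℝ) < t := ht
    simp only [quot]
    have h1 : ⟪a, (x + t • u) - y⟫ = ⟪a, x - y⟫ + t * ⟪a, u⟫ := by
      rw [show (x + t • u) - y = (x - y) + t • u from by abel,
        inner_add_right, real_inner_smul_right]
    rw [h1]
    field_simp
    ring
  exact ((dd_tendsto hf).sub tendsto_const_nhds).congr' heq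

lemma tendsto_quot_max_eq {f g : Euc d → ℝ} {Lf Lg : ℝ} (hfg : f x = g x)
    (hf : Filter.Tendsto (quot f x u) (nhdsWithin 0 (Set.Ioi 0)) (nhds Lf))
    (hg : Filter.Tendsto (quot g x u) (nhdsWithin 0 (Set.Ioi 0)) (nhds Lg)) :
    Filter.Tendsto (quot (fun z => max (f z) (g z)) x u) (nhdsWithin 0 (Set.Ioi 0))
      (nhds (max Lf Lg)) := by
  have heq : ∀ᶠ t in nhdsWithin (0:ℝ) (Set.Ioi 0),
      max (quot f x u t) (quot g x u t) = quot (fun z => max (f z) (g z)) x u t := by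
    filter_upwards [self_mem_nhdsWithin] with t ht
    have ht' : (0:ℝ) < t := ht
    simp only [quot]
    rw [show max (f x) (g x) = f x from (max_eq_left hfg.ge), ← hfg,
      ← max_sub_sub_right, ← max_div_div_right ht'.le]
  exact (hf.max hg).congr' heq

lemma tendsto_quot_maxzero_neg {f : Euc d → ℝ} (hcont : Continuous f) (hneg : f x < 0) :
    Filter.Tendsto (quot (fun z => max (f z) 0) x u) (nhdsWithin 0 (Set.Ioi 0)) (nhds 0) := by
  have hpath : Filter.Tendsto (fun t : ℝ => f (x + t • u)) (nhdsWithin 0 (Set.Ioi 0))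
      (nhds (f x)) := by
    have hcp : Continuous (fun t : ℝ => f (x + t • u)) := by continuity
    have := hcp.tendsto 0
    simpa using this.mono_left nhdsWithin_le_nhds
  have hev : ∀ᶠ t in nhdsWithin (0:ℝ) (Set.Ioi 0), f (x + t • u) < 0 :=
    hpath.eventually (Filter.Tendsto.eventually_lt_const hneg tendsto_id)
  have heq : ∀ᶠ t in nhdsWithin (0:ℝ) (Set.Ioi 0),
      (0:ℝ) = quot (fun z => max (f z) 0) x u t := by
    filter_upwards [hev] with t ht
    simp only [quot]
    rw [max_eq_right ht.le, max_eq_right hneg.le]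
    simp
  exact tendsto_const_nhds.congr' heq

end COMB

section COMB2
variable {d : ℕ} {x u : Euc d}

lemma tendsto_quot_constfun (r : ℝ) :
    Filter.Tendsto (quot (fun _ : Euc d => r) x u) (nhdsWithin 0 (Set.Ioi 0)) (nhds 0) := by
  have : quot (fun _ : Euc d => r) x u = fun _ => (0:ℝ) := by
    funext t; simp [quot]
  rw [this]
  exact tendsto_const_nhds

end COMB2
section CONE
variable {d : ℕ}

lemma comb_smul_sub {S : Set (Euc d)} (hS : Convex ℝ S) (w0 : Euc d) {θ1 θ2 : ℝ}
    (h1 : 0 ≤ θ1) (h2 : 0 ≤ θ2) {u1 u2 : Euc d} (hu1 : u1 ∈ S) (hu2 : u2 ∈ S) :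
    ∃ u ∈ S, (θ1 + θ2) • (u - w0) = θ1 • (u1 - w0) + θ2 • (u2 - w0) := by
  rcases (add_nonneg h1 h2).eq_or_lt with hT | hT
  · have hθ1 : θ1 = 0 := by linarith
    have hθ2 : θ2 = 0 := by linarith
    exact ⟨u1, hu1, by rw [hθ1, hθ2]; simp⟩
  · set T := θ1 + θ2 with hTdef
    refine ⟨(θ1/T) • u1 + (θ2/T) • u2, hS hu1 hu2 (by positivity) (by positivity) ?_, ?_⟩
    · rw [← add_div, div_self hT.ne']
    · have hTu : T • ((θ1/T) • u1 + (θ2/T) • u2) = θ1 • u1 + θ2 • u2 := by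
        rw [smul_add, smul_smul, smul_smul, mul_div_cancel₀ _ hT.ne', mul_div_cancel₀ _ hT.ne']
      rw [smul_sub, hTu, smul_sub, smul_sub, hTdef, add_smul]
      abel

lemma normalCone_isClosed (A : Set (Euc d)) (x : Euc d) : IsClosed (normalCone A x) := by
  have : normalCone A x = ⋂ y ∈ A, {v : Euc d | ⟪v, y - x⟫ ≤ 0} := by
    ext v; simp [normalCone]
  rw [this]
  exact isClosed_biInter fun y _ =>
    isClosed_le (Continuous.inner continuous_id continuous_const) continuous_const

lemma normalCone_convex (A : Set (Euc d)) (x : Euc d) : Convex ℝ (normalCone A x) := by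
  intro v hv w hw a b ha hb _
  intro y hy
  have h1 := mul_le_mul_of_nonneg_left (hv y hy) ha
  have h2 := mul_le_mul_of_nonneg_left (hw y hy) hb
  rw [inner_add_left, real_inner_smul_left, real_inner_smul_left]
  nlinarith

lemma normalCone_zero_mem (A : Set (Euc d)) (x : Euc d) : (0 : Euc d) ∈ normalCone A x := by
  intro y _
  simp

lemma exists_inner_repr (F : Euc d →L[ℝ] ℝ) : ∃ w : Euc d, ∀ z, ⟪w, z⟫ = F z :=
  ⟨(InnerProductSpace.toDual ℝ (Euc d)).symm F, fun _ => InnerProductSpace.toDual_symm_apply⟩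

lemma mem_closure_cone {A : Set (Euc d)} (hA : Convex ℝ A) {x w : Euc d} (hx : x ∈ A)
    (hw : ∀ ν ∈ normalCone A x, ⟪ν, w⟫ ≤ 0) :
    w ∈ closure {v : Euc d | ∃ t : ℝ, 0 ≤ t ∧ ∃ z ∈ A, v = t • (z - x)} := by
  set K : Set (Euc d) := {v : Euc d | ∃ t : ℝ, 0 ≤ t ∧ ∃ z ∈ A, v = t • (z - x)} with hK
  have hKconv : Convex ℝ K := by
    rintro v1 ⟨t1, ht1, z1, hz1, rfl⟩ v2 ⟨t2, ht2, z2, hz2, rfl⟩ a b ha hb hab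
    obtain ⟨z, hz, hzeq⟩ := comb_smul_sub hA x (mul_nonneg ha ht1) (mul_nonneg hb ht2) hz1 hz2
    refine ⟨a * t1 + b * t2, by positivity, z, hz, ?_⟩
    rw [hzeq, smul_smul, smul_smul]
  by_contra hnot
  obtain ⟨F, r, hFlt, hFw⟩ := geometric_hahn_banach_closed_point
    (hKconv.closure) isClosed_closure hnot
  obtain ⟨ν, hν⟩ := exists_inner_repr F
  have h0K : (0 : Euc d) ∈ K := ⟨0, le_refl 0, x, hx, by simp⟩
  have hr0 : (0:ℝ) < r := by
    have := hFlt 0 (subset_closure h0K)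
    simpa using this
  have hνN : ν ∈ normalCone A x := by
    intro z hz
    rw [hν]
    by_contra hpos
    push_neg at hpos
    set t : ℝ := (r + 1) / F (z - x) with htdef
    have ht : 0 < t := by positivity
    have htK : t • (z - x) ∈ K := ⟨t, ht.le, z, hz, rfl⟩
    have := hFlt _ (subset_closure htK)
    rw [map_smul, smul_eq_mul, htdef, div_mul_cancel₀ _ hpos.ne'] at this
    linarith
  have := hw ν hνN
  rw [hν] at this
  linarith [hFw]

end CONE
section FWD

lemma forward_dir {d l p : ℕ} {A : Set (Euc d)} {g0 h0 : Euc d → ℝ}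
    {gI hI : Fin l → Euc d → ℝ} {gE hE : Fin p → Euc d → ℝ} {xs : Euc d}
    (hfeas : Feasible A gI hI gE hE xs)
    (hcrit : IsCritical A g0 h0 gI hI gE hE xs) :
    ∃ cs : ℝ, 0 < cs ∧ ∃ V : SubgradTuple h0 hI gE hE xs,
      ∀ c ≥ cs, ∀ z ∈ A, Qfun g0 gI V c xs ≤ Qfun g0 gI V c z := by
  obtain ⟨V, lam, mu1, mu2, hlam, hmu1, hmu2, hslack, u0, hu0, uI, huI, uE, huE,
    zE, hzE, ν, hν, heq⟩ := hcrit
  have hsl : (0:ℝ) ≤ ∑ i, lam i := Finset.sum_nonneg fun i _ => hlam i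
  have hsm : (0:ℝ) ≤ ∑ j, (mu1 j + mu2 j) :=
    Finset.sum_nonneg fun j _ => add_nonneg (hmu1 j) (hmu2 j)
  refine ⟨1 + (∑ i, lam i) + (∑ j, (mu1 j + mu2 j)), by linarith, V, ?_⟩
  intro c hc z hz
  set w : Euc d := z - xs with hw
  have hclam : ∀ i, lam i ≤ c := by
    intro i
    have := Finset.single_le_sum (f := lam) (fun i _ => hlam i) (Finset.mem_univ i)
    linarith
  have hcmu : ∀ j, mu1 j + mu2 j ≤ c := by
    intro j
    have h2 : mu1 j + mu2 j ≤ ∑ x, (mu1 x + mu2 x) :=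
      Finset.single_le_sum (f := fun j => mu1 j + mu2 j)
        (fun j _ => add_nonneg (hmu1 j) (hmu2 j)) (Finset.mem_univ j)
    linarith
  -- Gam at xs is zero
  have hGxs : Gam gI V xs = 0 := by
    simp only [Gam, sub_self, inner_zero_right, sub_zero]
    rw [Finset.sum_eq_zero fun i _ => max_eq_right (hfeas.2.1 i),
      Finset.sum_eq_zero fun j _ => ?_, add_zero]
    have h := hfeas.2.2 j
    have h2 : hE j xs - gE j xs = 0 := by linarith
    rw [h, h2, max_self]
  -- termwise quantities
  set Ti : Fin l → ℝ := fun i => max (gI i z - hI i xs - ⟪V.vI i, w⟫) 0 with hTi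
  set Mj : Fin p → ℝ := fun j =>
    max (gE j z - hE j xs - ⟪V.vE j, w⟫) (hE j z - gE j xs - ⟪V.wE j, w⟫) with hMj
  have hGz : Gam gI V z = (∑ i, Ti i) + ∑ j, Mj j := rfl
  have hTnn : ∀ i, 0 ≤ Ti i := fun i => le_max_right _ _
  have hMnn : ∀ j, 0 ≤ Mj j := by
    intro j
    have h1 : ⟪V.vE j, w⟫ ≤ hE j z - hE j xs := by
      have := V.vE_mem j z; linarith
    have h2 : ⟪V.wE j, w⟫ ≤ gE j z - gE j xs := by
      have := V.wE_mem j z; linarith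
    rcases le_total (gE j z) (hE j z) with h | h
    · exact le_trans (by linarith : (0:ℝ) ≤ hE j z - gE j xs - ⟪V.wE j, w⟫) (le_max_right _ _)
    · exact le_trans (by linarith : (0:ℝ) ≤ gE j z - hE j xs - ⟪V.vE j, w⟫) (le_max_left _ _)
  -- termwise bounds
  have hTbound : ∀ i, lam i * (⟪uI i, w⟫ - ⟪V.vI i, w⟫) ≤ c * Ti i := by
    intro i
    have hsub : gI i xs + ⟪uI i, w⟫ ≤ gI i z := huI i z
    have hmax : gI i z - hI i xs - ⟪V.vI i, w⟫ ≤ Ti i := le_max_left _ _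
    have h1 : ⟪uI i, w⟫ - ⟪V.vI i, w⟫ ≤ Ti i - (gI i xs - hI i xs) := by linarith
    have h2 := mul_le_mul_of_nonneg_left h1 (hlam i)
    have h3 := hslack i
    have h4 := mul_le_mul_of_nonneg_right (hclam i) (hTnn i)
    nlinarith
  have hMbound : ∀ j, mu1 j * (⟪uE j, w⟫ - ⟪V.vE j, w⟫)
      - mu2 j * (⟪V.wE j, w⟫ - ⟪zE j, w⟫) ≤ c * Mj j := by
    intro j
    have hgExs : gE j xs = hE j xs := by have := hfeas.2.2 j; linarith
    have hsubE : gE j xs + ⟪uE j, w⟫ ≤ gE j z := huE j z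
    have hsubH : hE j xs + ⟪zE j, w⟫ ≤ hE j z := hzE j z
    have hle1 : gE j z - hE j xs - ⟪V.vE j, w⟫ ≤ Mj j := le_max_left _ _
    have hle2 : hE j z - gE j xs - ⟪V.wE j, w⟫ ≤ Mj j := le_max_right _ _
    have hm1 : ⟪uE j, w⟫ - ⟪V.vE j, w⟫ ≤ Mj j := by linarith
    have hm2 : -(⟪V.wE j, w⟫ - ⟪zE j, w⟫) ≤ Mj j := by linarith
    have h1 := mul_le_mul_of_nonneg_left hm1 (hmu1 j)
    have h2 := mul_le_mul_of_nonneg_left hm2 (hmu2 j)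
    have h3 := mul_le_mul_of_nonneg_right (hcmu j) (hMnn j)
    nlinarith
  -- stationarity, inner with w
  have hinner := congrArg (fun q : Euc d => ⟪q, w⟫) heq
  simp only [inner_zero_left, inner_add_left, inner_sub_left, sum_inner,
    real_inner_smul_left] at hinner
  -- sums of bounds
  have hsum1 : ∑ i, lam i * (⟪uI i, w⟫ - ⟪V.vI i, w⟫) ≤ ∑ i, c * Ti i :=
    Finset.sum_le_sum fun i _ => hTbound i
  have hsum2 : ∑ j, (mu1 j * (⟪uE j, w⟫ - ⟪V.vE j, w⟫)
      - mu2 j * (⟪V.wE j, w⟫ - ⟪zE j, w⟫)) ≤ ∑ j, c * Mj j :=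
    Finset.sum_le_sum fun j _ => hMbound j
  rw [Finset.sum_sub_distrib] at hsum2
  rw [← Finset.mul_sum] at hsum1 hsum2
  have hνw : ⟪ν, w⟫ ≤ 0 := hν z hz
  have hu0' : g0 xs + ⟪u0, w⟫ ≤ g0 z := hu0 z
  -- assemble
  simp only [Qfun, sub_self, inner_zero_right, sub_zero, hGxs, mul_zero, add_zero]
  rw [hGz, ← hw, mul_add]
  linarith [hinner, hsum1, hsum2, hνw, hu0']

end FWD
section QCONV
variable {d l p : ℕ}

lemma convexOn_const_mul {f : Euc d → ℝ} {c : ℝ} (hc : 0 ≤ c)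
    (hf : ConvexOn ℝ Set.univ f) : ConvexOn ℝ Set.univ (fun z => c * f z) := by
  refine ⟨convex_univ, fun z1 _ z2 _ s t hs ht hst => ?_⟩
  have := hf.2 (Set.mem_univ z1) (Set.mem_univ z2) hs ht hst
  simp only [smul_eq_mul] at *
  nlinarith

lemma convexOn_Qfun {g0 h0 : Euc d → ℝ} {gI hI : Fin l → Euc d → ℝ}
    {gE hE : Fin p → Euc d → ℝ} {xs : Euc d}
    (hg0 : ConvexOn ℝ Set.univ g0)
    (hgI : ∀ i, ConvexOn ℝ Set.univ (gI i))
    (hgE : ∀ j, ConvexOn ℝ Set.univ (gE j)) (hhE : ∀ j, ConvexOn ℝ Set.univ (hE j))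
    (V : SubgradTuple h0 hI gE hE xs) {c : ℝ} (hc : 0 ≤ c) :
    ConvexOn ℝ Set.univ (Qfun g0 gI V c) := by
  have h1 : ConvexOn ℝ Set.univ (fun x => g0 x - ⟪V.v0, x - xs⟫) := by
    have := convexOn_affsub hg0 0 V.v0 xs
    simpa using this
  have hA : ConvexOn ℝ Set.univ
      (fun x => ∑ i, max (gI i x - hI i xs - ⟪V.vI i, x - xs⟫) 0) :=
    convexOn_finsum fun i => convexOn_max
      (convexOn_affsub (hgI i) (hI i xs) (V.vI i) xs) (convexOn_const 0 convex_univ)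
  have hB : ConvexOn ℝ Set.univ
      (fun x => ∑ j, max (gE j x - hE j xs - ⟪V.vE j, x - xs⟫)
        (hE j x - gE j xs - ⟪V.wE j, x - xs⟫)) :=
    convexOn_finsum fun j => convexOn_max
      (convexOn_affsub (hgE j) (hE j xs) (V.vE j) xs)
      (convexOn_affsub (hhE j) (gE j xs) (V.wE j) xs)
  have h2 : ConvexOn ℝ Set.univ (fun x => c * Gam gI V x) :=
    convexOn_const_mul hc (hA.add hB)
  exact h1.add h2

end QCONV
section DDQ
variable {d l p : ℕ}

lemma dd_Qfun_decomp {g0 h0 : Euc d → ℝ} {gI hI : Fin l → Euc d → ℝ}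
    {gE hE : Fin p → Euc d → ℝ} {xs : Euc d}
    (hg0 : ConvexOn ℝ Set.univ g0)
    (hgI : ∀ i, ConvexOn ℝ Set.univ (gI i))
    (hgE : ∀ j, ConvexOn ℝ Set.univ (gE j)) (hhE : ∀ j, ConvexOn ℝ Set.univ (hE j))
    (V : SubgradTuple h0 hI gE hE xs)
    (hfeasI : ∀ i, gI i xs - hI i xs ≤ 0) (hfeasE : ∀ j, gE j xs - hE j xs = 0)
    {c : ℝ} (hc : 0 ≤ c) (u : Euc d) :
    dd (Qfun g0 gI V c) xs u
      = dd g0 xs u - ⟪V.v0, u⟫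
        + c * ((∑ i, (if gI i xs - hI i xs = 0
            then max (dd (gI i) xs u - ⟪V.vI i, u⟫) 0 else 0))
          + ∑ j, max (dd (gE j) xs u - ⟪V.vE j, u⟫) (dd (hE j) xs u - ⟪V.wE j, u⟫)) := by
  classical
  refine dd_unique (convexOn_Qfun hg0 hgI hgE hhE V hc) ?_
  have hti : ∀ i, Filter.Tendsto
      (quot (fun x => max (gI i x - hI i xs - ⟪V.vI i, x - xs⟫) 0) xs u)
      (nhdsWithin 0 (Set.Ioi 0))
      (nhds (if gI i xs - hI i xs = 0
        then max (dd (gI i) xs u - ⟪V.vI i, u⟫) 0 else 0)) := by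
    intro i
    by_cases h : gI i xs - hI i xs = 0
    · rw [if_pos h]
      refine tendsto_quot_max_eq ?_ (tendsto_quot_affsub (hgI i) (hI i xs) (V.vI i) xs)
        (tendsto_quot_constfun 0)
      simp only [sub_self, inner_zero_right, sub_zero]
      exact h
    · rw [if_neg h]
      refine tendsto_quot_maxzero_neg
        (convexOn_continuous (convexOn_affsub (hgI i) (hI i xs) (V.vI i) xs)) ?_
      simp only [sub_self, inner_zero_right, sub_zero]
      exact lt_of_le_of_ne (hfeasI i) h
  have htj : ∀ j, Filter.Tendsto
      (quot (fun x => max (gE j x - hE j xs - ⟪V.vE j, x - xs⟫)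
        (hE j x - gE j xs - ⟪V.wE j, x - xs⟫)) xs u)
      (nhdsWithin 0 (Set.Ioi 0))
      (nhds (max (dd (gE j) xs u - ⟪V.vE j, u⟫) (dd (hE j) xs u - ⟪V.wE j, u⟫))) := by
    intro j
    refine tendsto_quot_max_eq ?_ (tendsto_quot_affsub (hgE j) (hE j xs) (V.vE j) xs)
      (tendsto_quot_affsub (hhE j) (gE j xs) (V.wE j) xs)
    simp only [sub_self, inner_zero_right, sub_zero]
    linarith [hfeasE j]
  have hsumI := tendsto_quot_sum (x := xs) (u := u) (fun i => hti i)
  have hsumJ := tendsto_quot_sum (x := xs) (u := u) (fun j => htj j)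
  have hGam := tendsto_quot_const_mul c (tendsto_quot_add hsumI hsumJ)
  have hg0' : Filter.Tendsto (quot (fun x => g0 x - ⟪V.v0, x - xs⟫) xs u)
      (nhdsWithin 0 (Set.Ioi 0)) (nhds (dd g0 xs u - ⟪V.v0, u⟫)) := by
    have := tendsto_quot_affsub (x := xs) (u := u) hg0 0 V.v0 xs
    simpa using this
  exact tendsto_quot_add hg0' hGam

end DDQ
section REV
variable {d l p : ℕ}

lemma reverse_dir {A : Set (Euc d)} {g0 h0 : Euc d → ℝ}
    {gI hI : Fin l → Euc d → ℝ} {gE hE : Fin p → Euc d → ℝ} {xs : Euc d}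
    (hA : Convex ℝ A)
    (hg0 : ConvexOn ℝ Set.univ g0)
    (hgI : ∀ i, ConvexOn ℝ Set.univ (gI i))
    (hgE : ∀ j, ConvexOn ℝ Set.univ (gE j)) (hhE : ∀ j, ConvexOn ℝ Set.univ (hE j))
    (hfeas : Feasible A gI hI gE hE xs)
    {c : ℝ} (hc : 0 < c) (V : SubgradTuple h0 hI gE hE xs)
    (hmin : ∀ z ∈ A, Qfun g0 gI V c xs ≤ Qfun g0 gI V c z) :
    IsCritical A g0 h0 gI hI gE hE xs := by
  classical
  have hQ : ConvexOn ℝ Set.univ (Qfun g0 gI V c) := convexOn_Qfun hg0 hgI hgE hhE V hc.le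
  set ci : Fin l → ℝ := fun i => if gI i xs - hI i xs = 0 then c else 0 with hci
  have hci_nn : ∀ i, 0 ≤ ci i := by
    intro i
    by_cases h : gI i xs - hI i xs = 0 <;> simp [hci, h, hc.le]
  -- the candidate multiplier set
  set Φ : Euc d × (Fin l → ℝ × Euc d) × (Fin p → ℝ × Euc d × Euc d) → Euc d :=
    fun q => (q.1 - V.v0) + (∑ i, (q.2.1 i).1 • ((q.2.1 i).2 - V.vI i))
      + (∑ j, ((q.2.2 j).1 • ((q.2.2 j).2.1 - V.vE j)
          + (c - (q.2.2 j).1) • ((q.2.2 j).2.2 - V.wE j))) with hΦ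
  set KP : Set (Euc d × (Fin l → ℝ × Euc d) × (Fin p → ℝ × Euc d × Euc d)) :=
    (subdiff g0 xs) ×ˢ
      ((Set.univ.pi fun i => (Set.Icc (0:ℝ) (ci i)) ×ˢ subdiff (gI i) xs) ×ˢ
        (Set.univ.pi fun j => (Set.Icc (0:ℝ) c) ×ˢ (subdiff (gE j) xs ×ˢ subdiff (hE j) xs)))
    with hKP
  set D : Set (Euc d) := Φ '' KP with hD
  -- D is compact
  have hΦcont : Continuous Φ := by
    refine Continuous.add (Continuous.add ?_ ?_) ?_
    · exact continuous_fst.sub continuous_const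
    · refine continuous_finset_sum _ (fun i _ => Continuous.fun_smul ?_ ?_)
      · exact continuous_fst.comp ((continuous_apply i).comp
          (continuous_fst.comp continuous_snd))
      · exact (continuous_snd.comp ((continuous_apply i).comp
          (continuous_fst.comp continuous_snd))).sub continuous_const
    · refine continuous_finset_sum _ (fun j _ => Continuous.add ?_ ?_)
      · refine Continuous.fun_smul ?_ ?_
        · exact continuous_fst.comp ((continuous_apply j).comp
            (continuous_snd.comp continuous_snd))
        · exact (continuous_fst.comp (continuous_snd.comp ((continuous_apply j).comp
            (continuous_snd.comp continuous_snd)))).sub continuous_const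
      · refine Continuous.fun_smul ?_ ?_
        · exact continuous_const.sub (continuous_fst.comp ((continuous_apply j).comp
            (continuous_snd.comp continuous_snd)))
        · exact (continuous_snd.comp (continuous_snd.comp ((continuous_apply j).comp
            (continuous_snd.comp continuous_snd)))).sub continuous_const
  have hKPcomp : IsCompact KP := by
    refine (subdiff_isCompact hg0 xs).prod (IsCompact.prod ?_ ?_)
    · exact isCompact_univ_pi fun i => isCompact_Icc.prod (subdiff_isCompact (hgI i) xs)
    · exact isCompact_univ_pi fun j =>
        isCompact_Icc.prod ((subdiff_isCompact (hgE j) xs).prod (subdiff_isCompact (hhE j) xs))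
  have hDcomp : IsCompact D := hKPcomp.image hΦcont
  have hDconv : Convex ℝ D := by
    rintro s1 ⟨q1, hq1, rfl⟩ s2 ⟨q2, hq2, rfl⟩ a b ha hb hab
    have h1I := fun i => hq1.2.1 i (Set.mem_univ i)
    have h2I := fun i => hq2.2.1 i (Set.mem_univ i)
    have h1E := fun j => hq1.2.2 j (Set.mem_univ j)
    have h2E := fun j => hq2.2.2 j (Set.mem_univ j)
    have hcombI : ∀ i, ∃ u ∈ subdiff (gI i) xs,
        (a * (q1.2.1 i).1 + b * (q2.2.1 i).1) • (u - V.vI i)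
          = (a * (q1.2.1 i).1) • ((q1.2.1 i).2 - V.vI i)
            + (b * (q2.2.1 i).1) • ((q2.2.1 i).2 - V.vI i) :=
      fun i => comb_smul_sub (subdiff_convex (gI i) xs) (V.vI i)
        (mul_nonneg ha (h1I i).1.1) (mul_nonneg hb (h2I i).1.1) (h1I i).2 (h2I i).2
    choose uI'' huI'' heqI using hcombI
    have hcombE1 : ∀ j, ∃ u ∈ subdiff (gE j) xs,
        (a * (q1.2.2 j).1 + b * (q2.2.2 j).1) • (u - V.vE j)
          = (a * (q1.2.2 j).1) • ((q1.2.2 j).2.1 - V.vE j)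
            + (b * (q2.2.2 j).1) • ((q2.2.2 j).2.1 - V.vE j) :=
      fun j => comb_smul_sub (subdiff_convex (gE j) xs) (V.vE j)
        (mul_nonneg ha (h1E j).1.1) (mul_nonneg hb (h2E j).1.1) (h1E j).2.1 (h2E j).2.1
    choose uE'' huE'' heqE1 using hcombE1
    have hcombE2 : ∀ j, ∃ u ∈ subdiff (hE j) xs,
        (a * (c - (q1.2.2 j).1) + b * (c - (q2.2.2 j).1)) • (u - V.wE j)
          = (a * (c - (q1.2.2 j).1)) • ((q1.2.2 j).2.2 - V.wE j)
            + (b * (c - (q2.2.2 j).1)) • ((q2.2.2 j).2.2 - V.wE j) :=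
      fun j => comb_smul_sub (subdiff_convex (hE j) xs) (V.wE j)
        (mul_nonneg ha (by linarith [(h1E j).1.2] : (0:ℝ) ≤ c - (q1.2.2 j).1))
        (mul_nonneg hb (by linarith [(h2E j).1.2] : (0:ℝ) ≤ c - (q2.2.2 j).1))
        (h1E j).2.2 (h2E j).2.2
    choose zE'' hzE'' heqE2 using hcombE2
    refine ⟨(a • q1.1 + b • q2.1,
             fun i => (a * (q1.2.1 i).1 + b * (q2.2.1 i).1, uI'' i),
             fun j => (a * (q1.2.2 j).1 + b * (q2.2.2 j).1, uE'' j, zE'' j)),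
      ⟨subdiff_convex g0 xs hq1.1 hq2.1 ha hb hab, ?_, ?_⟩, ?_⟩
    · intro i _
      refine ⟨⟨add_nonneg (mul_nonneg ha (h1I i).1.1) (mul_nonneg hb (h2I i).1.1), ?_⟩,
        huI'' i⟩
      have e : a * ci i + b * ci i = ci i := by rw [← add_mul, hab, one_mul]
      have b1 := mul_le_mul_of_nonneg_left (h1I i).1.2 ha
      have b2 := mul_le_mul_of_nonneg_left (h2I i).1.2 hb
      show a * (q1.2.1 i).1 + b * (q2.2.1 i).1 ≤ ci i
      linarith
    · intro j _
      refine ⟨⟨add_nonneg (mul_nonneg ha (h1E j).1.1) (mul_nonneg hb (h2E j).1.1), ?_⟩,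
        huE'' j, hzE'' j⟩
      have b1 := mul_le_mul_of_nonneg_left (h1E j).1.2 ha
      have b2 := mul_le_mul_of_nonneg_left (h2E j).1.2 hb
      have e : a * c + b * c = c := by rw [← add_mul, hab, one_mul]
      show a * (q1.2.2 j).1 + b * (q2.2.2 j).1 ≤ c
      linarith
    · -- Φ of the combination
      show Φ _ = a • Φ q1 + b • Φ q2
      rw [hΦ]
      dsimp only
      have hv0 : a • V.v0 + b • V.v0 = V.v0 := by rw [← add_smul, hab, one_smul]
      have hX0 : (a • q1.1 + b • q2.1) - V.v0 = a • (q1.1 - V.v0) + b • (q2.1 - V.v0) := by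
        calc (a • q1.1 + b • q2.1) - V.v0
            = (a • q1.1 + b • q2.1) - (a • V.v0 + b • V.v0) := by rw [hv0]
          _ = a • (q1.1 - V.v0) + b • (q2.1 - V.v0) := by
              rw [smul_sub, smul_sub]; abel
      have hXI : (∑ i, (a * (q1.2.1 i).1 + b * (q2.2.1 i).1) • (uI'' i - V.vI i))
          = a • (∑ i, (q1.2.1 i).1 • ((q1.2.1 i).2 - V.vI i))
            + b • (∑ i, (q2.2.1 i).1 • ((q2.2.1 i).2 - V.vI i)) := by
        rw [Finset.smul_sum, Finset.smul_sum, ← Finset.sum_add_distrib]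
        refine Finset.sum_congr rfl fun i _ => ?_
        rw [heqI i, smul_smul, smul_smul]
      have hXE : (∑ j, ((a * (q1.2.2 j).1 + b * (q2.2.2 j).1) • (uE'' j - V.vE j)
            + (c - (a * (q1.2.2 j).1 + b * (q2.2.2 j).1)) • (zE'' j - V.wE j)))
          = a • (∑ j, ((q1.2.2 j).1 • ((q1.2.2 j).2.1 - V.vE j)
              + (c - (q1.2.2 j).1) • ((q1.2.2 j).2.2 - V.wE j)))
            + b • (∑ j, ((q2.2.2 j).1 • ((q2.2.2 j).2.1 - V.vE j)
              + (c - (q2.2.2 j).1) • ((q2.2.2 j).2.2 - V.wE j))) := by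
        rw [Finset.smul_sum, Finset.smul_sum, ← Finset.sum_add_distrib]
        refine Finset.sum_congr rfl fun j _ => ?_
        have hcc : c - (a * (q1.2.2 j).1 + b * (q2.2.2 j).1)
            = a * (c - (q1.2.2 j).1) + b * (c - (q2.2.2 j).1) := by
          linear_combination (-c) * hab
        rw [hcc, heqE1 j, heqE2 j, smul_add, smul_add, smul_smul, smul_smul,
          smul_smul, smul_smul]
        abel
      rw [hX0, hXI, hXE, smul_add, smul_add, smul_add, smul_add]
      abel
  -- key step : 0 ∈ D + normal cone
  have hkey : ∃ s ∈ D, -s ∈ normalCone A xs := by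
    by_contra hcon
    push_neg at hcon
    set Nneg : Set (Euc d) := {v | -v ∈ normalCone A xs} with hNneg
    have hNclosed : IsClosed Nneg := (normalCone_isClosed A xs).preimage continuous_neg
    have hNconv : Convex ℝ Nneg := by
      intro v hv w hw a b ha hb hab
      show -(a • v + b • w) ∈ normalCone A xs
      have he : -(a • v + b • w) = a • (-v) + b • (-w) := by module
      rw [he]
      exact normalCone_convex A xs hv hw ha hb hab
    have hdisj : Disjoint D Nneg := by
      rw [Set.disjoint_left]
      intro s hsD hsN
      exact hcon s hsD hsN
    obtain ⟨F, u', v', hFD, huv, hFN⟩ :=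
      geometric_hahn_banach_compact_closed hDconv hDcomp hNconv hNclosed hdisj
    obtain ⟨w, hw⟩ := exists_inner_repr F
    have h0N : (0:Euc d) ∈ Nneg := by
      show -(0:Euc d) ∈ normalCone A xs
      rw [neg_zero]
      exact normalCone_zero_mem A xs
    have hv'neg : v' < 0 := by
      have := hFN 0 h0N
      rwa [map_zero] at this
    have hwN : ∀ ν ∈ normalCone A xs, ⟪ν, w⟫ ≤ 0 := by
      intro ν hν
      by_contra hpos
      push_neg at hpos
      have hnum : (0:ℝ) < -v' + 1 := by linarith
      set t : ℝ := (-v' + 1) / ⟪ν, w⟫ with ht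
      have htpos : 0 < t := div_pos hnum hpos
      have htN : t • ν ∈ normalCone A xs := by
        intro y hy
        rw [real_inner_smul_left]
        have := hν y hy
        nlinarith
      have hmem : -(t • ν) ∈ Nneg := by
        show -(-(t • ν)) ∈ normalCone A xs
        rw [neg_neg]
        exact htN
      have hgt := hFN _ hmem
      rw [← hw, inner_neg_right, real_inner_smul_right, real_inner_comm] at hgt
      have hval : t * ⟪ν, w⟫ = -v' + 1 := by
        rw [ht, div_mul_cancel₀ _ hpos.ne']
      rw [hval] at hgt
      linarith
    have hwK := mem_closure_cone hA hfeas.1 hwN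
    have hQcone : ∀ z ∈ A, 0 ≤ dd (Qfun g0 gI V c) xs (z - xs) := by
      intro z hz
      refine ge_of_tendsto (dd_tendsto hQ) ?_
      filter_upwards [Ioo_mem_nhdsGT zero_lt_one] with t htm
      have ht0 : (0:ℝ) < t := htm.1
      have ht1 : t < 1 := htm.2
      have hmem : xs + t • (z - xs) ∈ A := by
        have he : xs + t • (z - xs) = (1 - t) • xs + t • z := by module
        rw [he]
        exact hA hfeas.1 hz (by linarith) ht0.le (by ring)
      have hle := hmin _ hmem
      show 0 ≤ (Qfun g0 gI V c (xs + t • (z - xs)) - Qfun g0 gI V c xs) / t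
      exact div_nonneg (by linarith) ht0.le
    have hwQ : 0 ≤ dd (Qfun g0 gI V c) xs w := by
      have hSclosed : IsClosed {v : Euc d | 0 ≤ dd (Qfun g0 gI V c) xs v} :=
        isClosed_le continuous_const (dd_continuous hQ)
      have hKS : {v : Euc d | ∃ t : ℝ, 0 ≤ t ∧ ∃ z ∈ A, v = t • (z - xs)}
          ⊆ {v : Euc d | 0 ≤ dd (Qfun g0 gI V c) xs v} := by
        rintro v ⟨t, htn, z, hz, rfl⟩
        show 0 ≤ dd (Qfun g0 gI V c) xs (t • (z - xs))
        rw [dd_smul_nonneg hQ htn]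
        exact mul_nonneg htn (hQcone z hz)
      exact (closure_minimal hKS hSclosed) hwK
    -- build the attaining element of D
    obtain ⟨u0s, hu0s, hu0dd⟩ := exists_dd_attain hg0 xs w
    choose uIs huIs huIdd using fun i => exists_dd_attain (hgI i) xs w
    choose uEs huEs huEdd using fun j => exists_dd_attain (hgE j) xs w
    choose zEs hzEs hzEdd using fun j => exists_dd_attain (hhE j) xs w
    set lamf : Fin l → ℝ :=
      fun i => if 0 ≤ dd (gI i) xs w - ⟪V.vI i, w⟫ then ci i else 0 with hlamf
    set mu1f : Fin p → ℝ :=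
      fun j => if dd (hE j) xs w - ⟪V.wE j, w⟫ ≤ dd (gE j) xs w - ⟪V.vE j, w⟫
        then c else 0 with hmu1f
    have hlam_mem : ∀ i, lamf i ∈ Set.Icc (0:ℝ) (ci i) := by
      intro i
      show (if 0 ≤ dd (gI i) xs w - ⟪V.vI i, w⟫ then ci i else 0) ∈ Set.Icc (0:ℝ) (ci i)
      by_cases hsgn : 0 ≤ dd (gI i) xs w - ⟪V.vI i, w⟫
      · rw [if_pos hsgn]; exact ⟨hci_nn i, le_refl _⟩
      · rw [if_neg hsgn]; exact ⟨le_refl _, hci_nn i⟩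
    have hmu_mem : ∀ j, mu1f j ∈ Set.Icc (0:ℝ) c := by
      intro j
      show (if dd (hE j) xs w - ⟪V.wE j, w⟫ ≤ dd (gE j) xs w - ⟪V.vE j, w⟫
        then c else 0) ∈ Set.Icc (0:ℝ) c
      by_cases hsgn : dd (hE j) xs w - ⟪V.wE j, w⟫ ≤ dd (gE j) xs w - ⟪V.vE j, w⟫
      · rw [if_pos hsgn]; exact ⟨hc.le, le_refl _⟩
      · rw [if_neg hsgn]; exact ⟨le_refl _, hc.le⟩
    have hqsK : ((u0s, fun i => (lamf i, uIs i), fun j => (mu1f j, uEs j, zEs j)) :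
        Euc d × (Fin l → ℝ × Euc d) × (Fin p → ℝ × Euc d × Euc d)) ∈ KP :=
      ⟨hu0s, fun i _ => ⟨hlam_mem i, huIs i⟩, fun j _ => ⟨hmu_mem j, huEs j, hzEs j⟩⟩
    set qs : Euc d × (Fin l → ℝ × Euc d) × (Fin p → ℝ × Euc d × Euc d) :=
      (u0s, fun i => (lamf i, uIs i), fun j => (mu1f j, uEs j, zEs j)) with hqs
    have hsD : Φ qs ∈ D := ⟨qs, hqsK, rfl⟩
    have hval : ⟪Φ qs, w⟫ = dd (Qfun g0 gI V c) xs w := by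
      rw [dd_Qfun_decomp hg0 hgI hgE hhE V hfeas.2.1 hfeas.2.2 hc.le w]
      rw [hΦ, hqs]
      dsimp only
      rw [inner_add_left, inner_add_left, inner_sub_left, sum_inner, sum_inner, hu0dd]
      have hIterm : ∀ i, ⟪lamf i • (uIs i - V.vI i), w⟫
          = c * (if gI i xs - hI i xs = 0
            then max (dd (gI i) xs w - ⟪V.vI i, w⟫) 0 else 0) := by
        intro i
        rw [real_inner_smul_left, inner_sub_left, huIdd i]
        by_cases hact : gI i xs - hI i xs = 0
        · rw [if_pos hact]
          by_cases hsgn : 0 ≤ dd (gI i) xs w - ⟪V.vI i, w⟫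
          · have hl : lamf i = c := by
              show (if 0 ≤ dd (gI i) xs w - ⟪V.vI i, w⟫ then ci i else 0) = c
              rw [if_pos hsgn]
              show (if gI i xs - hI i xs = 0 then c else 0) = c
              rw [if_pos hact]
            rw [hl, max_eq_left hsgn]
          · have hl : lamf i = 0 := by
              show (if 0 ≤ dd (gI i) xs w - ⟪V.vI i, w⟫ then ci i else 0) = 0
              rw [if_neg hsgn]
            rw [hl, max_eq_right (le_of_not_ge hsgn)]
            ring
        · rw [if_neg hact]
          have hl : lamf i = 0 := by
            show (if 0 ≤ dd (gI i) xs w - ⟪V.vI i, w⟫ then ci i else 0) = 0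
            by_cases hsgn : 0 ≤ dd (gI i) xs w - ⟪V.vI i, w⟫
            · rw [if_pos hsgn]
              show (if gI i xs - hI i xs = 0 then c else 0) = 0
              rw [if_neg hact]
            · rw [if_neg hsgn]
          rw [hl]
          ring
      have hEterm : ∀ j, ⟪mu1f j • (uEs j - V.vE j) + (c - mu1f j) • (zEs j - V.wE j), w⟫
          = c * max (dd (gE j) xs w - ⟪V.vE j, w⟫) (dd (hE j) xs w - ⟪V.wE j, w⟫) := by
        intro j
        rw [inner_add_left, real_inner_smul_left, real_inner_smul_left,
          inner_sub_left, inner_sub_left, huEdd j, hzEdd j]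
        by_cases hcase : dd (hE j) xs w - ⟪V.wE j, w⟫ ≤ dd (gE j) xs w - ⟪V.vE j, w⟫
        · have hm : mu1f j = c := by
            show (if dd (hE j) xs w - ⟪V.wE j, w⟫ ≤ dd (gE j) xs w - ⟪V.vE j, w⟫
              then c else 0) = c
            rw [if_pos hcase]
          rw [hm, max_eq_left hcase]
          ring
        · have hm : mu1f j = 0 := by
            show (if dd (hE j) xs w - ⟪V.wE j, w⟫ ≤ dd (gE j) xs w - ⟪V.vE j, w⟫
              then c else 0) = 0
            rw [if_neg hcase]
          rw [hm, max_eq_right (le_of_not_ge hcase)]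
          ring
      rw [Finset.sum_congr rfl (fun i _ => hIterm i),
        Finset.sum_congr rfl (fun j _ => hEterm j)]
      rw [mul_add, Finset.mul_sum, Finset.mul_sum]
      ring
    have hlt := hFD _ hsD
    rw [← hw, real_inner_comm, hval] at hlt
    linarith
  -- conclude criticality
  obtain ⟨s, hsD, hsN⟩ := hkey
  obtain ⟨q, hq, rfl⟩ := hsD
  obtain ⟨hq0, hqh⟩ := hq
  obtain ⟨hqI, hqE⟩ := hqh
  refine ⟨V, fun i => (q.2.1 i).1, fun j => (q.2.2 j).1, fun j => c - (q.2.2 j).1,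
    ?_, ?_, ?_, ?_, q.1, hq0, fun i => (q.2.1 i).2, ?_, fun j => (q.2.2 j).2.1, ?_,
    fun j => (q.2.2 j).2.2, ?_, -(Φ q), hsN, ?_⟩
  · exact fun i => ((hqI i (Set.mem_univ i)).1).1
  · exact fun j => ((hqE j (Set.mem_univ j)).1).1
  · intro j
    have h2 := ((hqE j (Set.mem_univ j)).1).2
    show (0:ℝ) ≤ c - (q.2.2 j).1
    linarith
  · intro i
    show (q.2.1 i).1 * (gI i xs - hI i xs) = 0
    by_cases h : gI i xs - hI i xs = 0
    · rw [h, mul_zero]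
    · have hub := ((hqI i (Set.mem_univ i)).1).2
      have hlb := ((hqI i (Set.mem_univ i)).1).1
      have : ci i = 0 := by simp [hci, h]
      rw [this] at hub
      have : (q.2.1 i).1 = 0 := le_antisymm hub hlb
      rw [this, zero_mul]
  · exact fun i => (hqI i (Set.mem_univ i)).2
  · exact fun j => (hqE j (Set.mem_univ j)).2.1
  · exact fun j => (hqE j (Set.mem_univ j)).2.2
  · -- the stationarity equation
    have hsplit : ∑ j, ((q.2.2 j).1 • ((q.2.2 j).2.1 - V.vE j)
          + (c - (q.2.2 j).1) • ((q.2.2 j).2.2 - V.wE j))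
        = (∑ j, (q.2.2 j).1 • ((q.2.2 j).2.1 - V.vE j))
          + ∑ j, (c - (q.2.2 j).1) • ((q.2.2 j).2.2 - V.wE j) :=
      Finset.sum_add_distrib
    have hneg : ∀ j, (c - (q.2.2 j).1) • ((q.2.2 j).2.2 - V.wE j)
        = -((c - (q.2.2 j).1) • (V.wE j - (q.2.2 j).2.2)) := by
      intro j
      rw [← smul_neg, neg_sub]
    have hneg' : ∑ j, (c - (q.2.2 j).1) • ((q.2.2 j).2.2 - V.wE j)
        = -∑ j, (c - (q.2.2 j).1) • (V.wE j - (q.2.2 j).2.2) := by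
      rw [← Finset.sum_neg_distrib]
      exact Finset.sum_congr rfl fun j _ => hneg j
    show (0:Euc d) = (q.1 - V.v0) + (∑ i, (q.2.1 i).1 • ((q.2.1 i).2 - V.vI i))
      + (∑ j, (q.2.2 j).1 • ((q.2.2 j).2.1 - V.vE j))
      - (∑ j, (c - (q.2.2 j).1) • (V.wE j - (q.2.2 j).2.2)) + -(Φ q)
    rw [hΦ]
    simp only
    rw [hsplit, hneg']
    abel
end REV
theorem stmt1 {d l p : ℕ} (A : Set (Euc d)) (g0 h0 : Euc d → ℝ)
    (gI hI : Fin l → Euc d → ℝ) (gE hE : Fin p → Euc d → ℝ)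
    (hA : Convex ℝ A) (hAcl : IsClosed A) (hAne : A.Nonempty)
    (hg0 : ConvexOn ℝ Set.univ g0) (hh0 : ConvexOn ℝ Set.univ h0)
    (hgI : ∀ i, ConvexOn ℝ Set.univ (gI i)) (hhI : ∀ i, ConvexOn ℝ Set.univ (hI i))
    (hgE : ∀ j, ConvexOn ℝ Set.univ (gE j)) (hhE : ∀ j, ConvexOn ℝ Set.univ (hE j))
    (xs : Euc d) (hfeas : Feasible A gI hI gE hE xs) :
    IsCritical A g0 h0 gI hI gE hE xs ↔
      ∃ cs : ℝ, 0 < cs ∧ ∃ V : SubgradTuple h0 hI gE hE xs,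
        ∀ c ≥ cs, ∀ z ∈ A, Qfun g0 gI V c xs ≤ Qfun g0 gI V c z := by
  constructor
  · exact fun h => forward_dir hfeas h
  · rintro ⟨cs, hcs, V, hmin⟩
    exact reverse_dir hA hg0 hgI hgE hhE hfeas hcs V (hmin cs le_rfl)
end
end

section
/- If the penalty term φ is coercive on A, then for every y ∈ ℝ^d and every subgradient tuple V at y the convex function Γ(·, y, V) attains a global minimum on the set A. -/
open RealInnerProductSpace Finset Filter Topology

noncomputable section

variable {d l p : ℕ}

/-! The linearisation of each `h_k` (resp. `g_j`) at `y` lies below it, so `Γ(·, y, V) ≥ φ`;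
hence `Γ(·, y, V)` inherits coercivity from `φ`. Being a finite sum of maxima of convex, hence
continuous, functions, it is continuous, so it attains its minimum on the closed set `A`. -/

section Coercive

variable {d : ℕ} {F G : Euc d → ℝ} {A : Set (Euc d)}

theorem CoerciveOn.mono (hF : CoerciveOn F A) (hFG : ∀ x, F x ≤ G x) : CoerciveOn G A :=
  fun u huA hu => tendsto_atTop_mono (fun n => hFG (u n)) (hF u huA hu)

theorem CoerciveOn.isBounded_sublevel (hF : CoerciveOn F A) (c : ℝ) :
    Bornology.IsBounded {x ∈ A | F x ≤ c} := by
  by_contra hunbdd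
  simp only [isBounded_iff_forall_norm_le, not_exists, not_forall, not_le] at hunbdd
  choose u hu hnorm using fun n : ℕ => hunbdd n
  have hu_norm : Tendsto (fun n => ‖u n‖) atTop atTop :=
    tendsto_atTop_mono (fun n => (hnorm n).le) tendsto_natCast_atTop_atTop
  obtain ⟨n, hn⟩ := ((hF u (fun n => (hu n).1) hu_norm).eventually_gt_atTop c).exists
  exact (hu n).2.not_gt hn

theorem CoerciveOn.exists_isMinOn (hF : CoerciveOn F A) (hcont : ContinuousOn F A)
    (hA : IsClosed A) (hne : A.Nonempty) : ∃ x ∈ A, IsMinOn F A x := by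
  obtain ⟨x₀, hx₀⟩ := hne
  refine hcont.exists_isMinOn' hA hx₀ ?_
  have hsub : {x ∈ A | F x ≤ F x₀}ᶜ ∈ cocompact (Euc d) := by
    rw [← Metric.cobounded_eq_cocompact]
    exact Bornology.isBounded_def.mp (hF.isBounded_sublevel _)
  filter_upwards [mem_inf_of_left hsub, mem_inf_of_right (mem_principal_self A)] with x hx hxA
  exact le_of_not_ge fun hle => hx ⟨hxA, hle⟩

end Coercive

theorem ConvexOn.continuous_of_univ {E : Type*} [NormedAddCommGroup E] [NormedSpace ℝ E]
    [FiniteDimensional ℝ E] {f : E → ℝ} (hf : ConvexOn ℝ Set.univ f) : Continuous f :=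
  continuousOn_univ.mp (hf.continuousOn isOpen_univ)

section Gam

variable {d l p : ℕ} {h0 : Euc d → ℝ} {gI hI : Fin l → Euc d → ℝ} {gE hE : Fin p → Euc d → ℝ}
  {y : Euc d} (V : SubgradTuple h0 hI gE hE y)

theorem phi_le_Gam (x : Euc d) : phi gI hI gE hE x ≤ Gam gI V x := by
  refine add_le_add (sum_le_sum fun i _ => max_le_max ?_ le_rfl) (sum_le_sum fun j _ => ?_)
  · linarith [V.vI_mem i x]
  · have hvE := V.vE_mem j x
    have hwE := V.wE_mem j x
    rw [abs_sub_le_iff]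
    exact ⟨le_max_of_le_left (by linarith), le_max_of_le_right (by linarith)⟩

theorem continuous_Gam (hgI : ∀ i, Continuous (gI i)) (hgE : ∀ j, Continuous (gE j))
    (hhE : ∀ j, Continuous (hE j)) : Continuous (Gam gI V) := by
  have hlin : ∀ v : Euc d, Continuous fun x : Euc d => ⟪v, x - y⟫ :=
    fun v => continuous_const.inner (continuous_id.sub continuous_const)
  refine (continuous_finsetSum _ fun i _ => ?_).add (continuous_finsetSum _ fun j _ => ?_)
  · exact (((hgI i).sub continuous_const).sub (hlin _)).max continuous_const
  · exact (((hgE j).sub continuous_const).sub (hlin _)).max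
      (((hhE j).sub continuous_const).sub (hlin _))

end Gam

theorem stmt3_general {d l p : ℕ} (A : Set (Euc d)) (h0 : Euc d → ℝ)
    (gI hI : Fin l → Euc d → ℝ) (gE hE : Fin p → Euc d → ℝ)
    (hAcl : IsClosed A) (hAne : A.Nonempty)
    (hgI : ∀ i, ConvexOn ℝ Set.univ (gI i))
    (hgE : ∀ j, ConvexOn ℝ Set.univ (gE j)) (hhE : ∀ j, ConvexOn ℝ Set.univ (hE j))
    (hcoer : CoerciveOn (phi gI hI gE hE) A)
    (y : Euc d) (V : SubgradTuple h0 hI gE hE y) :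
    ∃ xs ∈ A, ∀ z ∈ A, Gam gI V xs ≤ Gam gI V z := by
  have hcont : Continuous (Gam gI V) :=
    continuous_Gam V (fun i => (hgI i).continuous_of_univ) (fun j => (hgE j).continuous_of_univ)
      (fun j => (hhE j).continuous_of_univ)
  obtain ⟨xs, hxs, hmin⟩ :=
    (hcoer.mono (phi_le_Gam V)).exists_isMinOn hcont.continuousOn hAcl hAne
  exact ⟨xs, hxs, isMinOn_iff.mp hmin⟩

theorem stmt3 {d l p : ℕ} (A : Set (Euc d)) (g0 h0 : Euc d → ℝ)
    (gI hI : Fin l → Euc d → ℝ) (gE hE : Fin p → Euc d → ℝ)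
    (hA : Convex ℝ A) (hAcl : IsClosed A) (hAne : A.Nonempty)
    (hg0 : ConvexOn ℝ Set.univ g0) (hh0 : ConvexOn ℝ Set.univ h0)
    (hgI : ∀ i, ConvexOn ℝ Set.univ (gI i)) (hhI : ∀ i, ConvexOn ℝ Set.univ (hI i))
    (hgE : ∀ j, ConvexOn ℝ Set.univ (gE j)) (hhE : ∀ j, ConvexOn ℝ Set.univ (hE j))
    (hcoer : CoerciveOn (phi gI hI gE hE) A)
    (y : Euc d) (V : SubgradTuple h0 hI gE hE y) :
    ∃ xs ∈ A, ∀ z ∈ A, Gam gI V xs ≤ Gam gI V z :=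
  stmt3_general A h0 gI hI gE hE hAcl hAne hgI hgE hhE hcoer y V
end
end

section
/- Let y ∈ ℝ^d, let V be a subgradient tuple at y, let x̂ be a global minimiser of Γ(·, y, V) over A, and suppose that for every c > 0 a global minimiser x(c) of Q_c(·, y, V) over A is chosen. Then Γ(x(c), y, V) → Γ(x̂, y, V) as c → +∞. -/
open RealInnerProductSpace Finset Filter Topology

noncomputable section

variable {d l p : ℕ}

/-!
Write `Q_c = L + c Γ` with `L(z) = g₀(z) - ⟪v₀, z - y⟫`. Comparing the minimality of `x(c)` for
`Q_c` at `x̂` with the minimality of `x(1)` for `Q_1` at `x(c)` gives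
`(c - 1) (Γ(x(c)) - Γ(x̂)) ≤ Q_1(x̂) - Q_1(x(1))`, a constant; together with `Γ(x̂) ≤ Γ(x(c))`
this squeezes `Γ(x(c))` to `Γ(x̂)` as `c → ∞`.
-/

section PenaltyMethod

variable {X : Type*} {A : Set X} {L G : X → ℝ}

theorem sub_one_mul_penalty_sub_le {x₁ xc xhat : X} {c : ℝ}
    (h₁ : IsMinOn (fun z => L z + G z) A x₁) (hxc : xc ∈ A)
    (hc : IsMinOn (fun z => L z + c * G z) A xc) (hxhat : xhat ∈ A) :
    (c - 1) * (G xc - G xhat) ≤ L xhat + G xhat - (L x₁ + G x₁) := by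
  have h₁c : L x₁ + G x₁ ≤ L xc + G xc := isMinOn_iff.1 h₁ xc hxc
  have hcx : L xc + c * G xc ≤ L xhat + c * G xhat := isMinOn_iff.1 hc xhat hxhat
  linarith

theorem tendsto_penalty_of_isMinOn {x : ℝ → X} {xhat : X} (hxhatA : xhat ∈ A)
    (hxhat : IsMinOn G A xhat)
    (hx : ∀ c, 1 ≤ c → x c ∈ A ∧ IsMinOn (fun z => L z + c * G z) A (x c)) :
    Tendsto (fun c => G (x c)) atTop (𝓝 (G xhat)) := by
  set M := L xhat + G xhat - (L (x 1) + G (x 1))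
  have hx₁ : IsMinOn (fun z => L z + G z) A (x 1) := by simpa using (hx 1 le_rfl).2
  have hupper : ∀ c, 1 < c → G (x c) ≤ G xhat + M / (c - 1) := by
    intro c hc
    obtain ⟨hxcA, hxc⟩ := hx c hc.le
    rw [← sub_le_iff_le_add', le_div_iff₀ (sub_pos.2 hc), mul_comm]
    exact sub_one_mul_penalty_sub_le hx₁ hxcA hxc hxhatA
  have hM : Tendsto (fun c : ℝ => G xhat + M / (c - 1)) atTop (𝓝 (G xhat)) := by
    have hden : Tendsto (fun c : ℝ => c - 1) atTop atTop :=
      tendsto_atTop_add_const_right atTop (-1) tendsto_id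
    simpa using tendsto_const_nhds.add (tendsto_const_nhds.div_atTop hden)
  refine tendsto_of_tendsto_of_tendsto_of_le_of_le' tendsto_const_nhds hM ?_ ?_
  · filter_upwards [eventually_ge_atTop 1] with c hc using isMinOn_iff.1 hxhat _ (hx c hc).1
  · filter_upwards [eventually_gt_atTop 1] with c hc using hupper c hc

end PenaltyMethod

theorem stmt7_general {d l p : ℕ} (A : Set (Euc d)) (g0 h0 : Euc d → ℝ)
    (gI hI : Fin l → Euc d → ℝ) (gE hE : Fin p → Euc d → ℝ)
    (y : Euc d) (V : SubgradTuple h0 hI gE hE y)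
    (xhat : Euc d) (hxhatA : xhat ∈ A) (hxhat : ∀ z ∈ A, Gam gI V xhat ≤ Gam gI V z)
    (xsel : ℝ → Euc d)
    (hsel : ∀ c : ℝ, 0 < c → xsel c ∈ A ∧ ∀ z ∈ A, Qfun g0 gI V c (xsel c) ≤ Qfun g0 gI V c z) :
    Tendsto (fun c => Gam gI V (xsel c)) atTop (𝓝 (Gam gI V xhat)) := by
  refine tendsto_penalty_of_isMinOn (L := fun z => g0 z - ⟪V.v0, z - y⟫) hxhatA
    (isMinOn_iff.2 hxhat) fun c hc => ?_
  obtain ⟨hxcA, hxc⟩ := hsel c (zero_lt_one.trans_le hc)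
  exact ⟨hxcA, isMinOn_iff.2 hxc⟩

theorem stmt7 {d l p : ℕ} (A : Set (Euc d)) (g0 h0 : Euc d → ℝ)
    (gI hI : Fin l → Euc d → ℝ) (gE hE : Fin p → Euc d → ℝ)
    (hA : Convex ℝ A) (hAcl : IsClosed A) (hAne : A.Nonempty)
    (hg0 : ConvexOn ℝ Set.univ g0) (hh0 : ConvexOn ℝ Set.univ h0)
    (hgI : ∀ i, ConvexOn ℝ Set.univ (gI i)) (hhI : ∀ i, ConvexOn ℝ Set.univ (hI i))
    (hgE : ∀ j, ConvexOn ℝ Set.univ (gE j)) (hhE : ∀ j, ConvexOn ℝ Set.univ (hE j))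
    (y : Euc d) (V : SubgradTuple h0 hI gE hE y)
    (xhat : Euc d) (hxhatA : xhat ∈ A) (hxhat : ∀ z ∈ A, Gam gI V xhat ≤ Gam gI V z)
    (xsel : ℝ → Euc d)
    (hsel : ∀ c : ℝ, 0 < c → xsel c ∈ A ∧ ∀ z ∈ A, Qfun g0 gI V c (xsel c) ≤ Qfun g0 gI V c z) :
    Tendsto (fun c => Gam gI V (xsel c)) atTop (𝓝 (Gam gI V xhat)) :=
  stmt7_general A g0 h0 gI hI gE hE y V xhat hxhatA hxhat xsel hsel
end
end

section
/- Let y ∈ A, let V be a subgradient tuple at y, let c_0 > 0, let x̂ be a global minimiser of Γ(·, y, V) over A, and suppose that for every c ≥ c_0 a global minimiser x(c) of Q_c(·, y, V) over A is chosen. If Γ(x̂, y, V) = Γ(y, y, V), then for every ε > 0 there exists c* ≥ c_0 such that for all c ≥ c* one has Γ(x(c), y, V) ≤ Γ(x̂, y, V) + ε. -/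
open RealInnerProductSpace Finset Filter Topology

noncomputable section

variable {d l p : ℕ}

/-!
Minimality of `x(c₀)` tested at `x(c)`, added to minimality of `x(c)` tested at `y`, gives
`(c - c₀) (Γ(x(c)) - Γ(y)) ≤ Q_{c₀}(y) - Q_{c₀}(x(c₀))`, a constant independent of `c`.
Hence `Γ(x(c)) ≤ Γ(y) + O(1/c)`, and `Γ(y) = Γ(x̂)`.
-/

section PenaltyMethod

variable {α : Type*} {ψ Γ : α → ℝ} {A : Set α}

theorem sub_mul_sub_le_of_isMinOn {a b : ℝ} {xa xb y : α}
    (ha : IsMinOn (fun z => ψ z + a * Γ z) A xa) (hb : IsMinOn (fun z => ψ z + b * Γ z) A xb)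
    (hxb : xb ∈ A) (hy : y ∈ A) :
    (b - a) * (Γ xb - Γ y) ≤ (ψ y + a * Γ y) - (ψ xa + a * Γ xa) := by
  have hab : ψ xa + a * Γ xa ≤ ψ xb + a * Γ xb := ha hxb
  have hby : ψ xb + b * Γ xb ≤ ψ y + b * Γ y := hb hy
  linear_combination hab + hby

theorem eventually_le_add_of_isMinOn {x : ℝ → α} {c₀ : ℝ} {y : α}
    (hx : ∀ c ≥ c₀, x c ∈ A ∧ IsMinOn (fun z => ψ z + c * Γ z) A (x c)) (hy : y ∈ A)
    {ε : ℝ} (hε : 0 < ε) :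
    ∀ᶠ c in atTop, Γ (x c) ≤ Γ y + ε := by
  set K := (ψ y + c₀ * Γ y) - (ψ (x c₀) + c₀ * Γ (x c₀))
  have hlim : Tendsto (fun c => K / (c - c₀)) atTop (𝓝 0) :=
    tendsto_const_nhds.div_atTop (tendsto_atTop_add_const_right _ _ tendsto_id)
  filter_upwards [hlim.eventually (gt_mem_nhds hε), eventually_gt_atTop c₀] with c hKc hc
  have hc' : 0 < c - c₀ := sub_pos.2 hc
  have hbound : (c - c₀) * (Γ (x c) - Γ y) ≤ K :=
    sub_mul_sub_le_of_isMinOn (hx c₀ le_rfl).2 (hx c hc.le).2 (hx c hc.le).1 hy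
  rw [div_lt_iff₀ hc'] at hKc
  have hgap : Γ (x c) - Γ y ≤ ε := le_of_mul_le_mul_left (by linarith) hc'
  linarith

end PenaltyMethod

theorem stmt8_general {d l p : ℕ} (A : Set (Euc d)) (g0 h0 : Euc d → ℝ)
    (gI hI : Fin l → Euc d → ℝ) (gE hE : Fin p → Euc d → ℝ)
    (y : Euc d) (hyA : y ∈ A) (V : SubgradTuple h0 hI gE hE y)
    (c0 : ℝ)
    (xhat : Euc d)
    (xsel : ℝ → Euc d)
    (hsel : ∀ c ≥ c0, xsel c ∈ A ∧ ∀ z ∈ A, Qfun g0 gI V c (xsel c) ≤ Qfun g0 gI V c z)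
    (heq : Gam gI V xhat = Gam gI V y) :
    ∀ ε : ℝ, 0 < ε → ∃ cs ≥ c0, ∀ c ≥ cs, Gam gI V (xsel c) ≤ Gam gI V xhat + ε := by
  intro ε hε
  have hmin : ∀ c ≥ c0, xsel c ∈ A ∧
      IsMinOn (fun z => (g0 z - ⟪V.v0, z - y⟫) + c * Gam gI V z) A (xsel c) :=
    fun c hc => ⟨(hsel c hc).1, isMinOn_iff.2 (hsel c hc).2⟩
  obtain ⟨cs, hcs⟩ := eventually_atTop.1 (eventually_le_add_of_isMinOn hmin hyA hε)
  exact ⟨max cs c0, le_max_right _ _, fun c hc => heq ▸ hcs c (le_of_max_le_left hc)⟩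

theorem stmt8 {d l p : ℕ} (A : Set (Euc d)) (g0 h0 : Euc d → ℝ)
    (gI hI : Fin l → Euc d → ℝ) (gE hE : Fin p → Euc d → ℝ)
    (hA : Convex ℝ A) (hAcl : IsClosed A) (hAne : A.Nonempty)
    (hg0 : ConvexOn ℝ Set.univ g0) (hh0 : ConvexOn ℝ Set.univ h0)
    (hgI : ∀ i, ConvexOn ℝ Set.univ (gI i)) (hhI : ∀ i, ConvexOn ℝ Set.univ (hI i))
    (hgE : ∀ j, ConvexOn ℝ Set.univ (gE j)) (hhE : ∀ j, ConvexOn ℝ Set.univ (hE j))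
    (y : Euc d) (hyA : y ∈ A) (V : SubgradTuple h0 hI gE hE y)
    (c0 : ℝ) (hc0 : 0 < c0)
    (xhat : Euc d) (hxhatA : xhat ∈ A) (hxhat : ∀ z ∈ A, Gam gI V xhat ≤ Gam gI V z)
    (xsel : ℝ → Euc d)
    (hsel : ∀ c ≥ c0, xsel c ∈ A ∧ ∀ z ∈ A, Qfun g0 gI V c (xsel c) ≤ Qfun g0 gI V c z)
    (heq : Gam gI V xhat = Gam gI V y) :
    ∀ ε : ℝ, 0 < ε → ∃ cs ≥ c0, ∀ c ≥ cs, Gam gI V (xsel c) ≤ Gam gI V xhat + ε :=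
  stmt8_general A g0 h0 gI hI gE hE y hyA V c0 xhat xsel hsel heq
end
end

section
/- Let y ∈ A, let V be a subgradient tuple at y, let c_0 > 0, let x̂ be a global minimiser of Γ(·, y, V) over A, and suppose that for every c ≥ c_0 a global minimiser x(c) of Q_c(·, y, V) over A is chosen. If Γ(x̂, y, V) < Γ(y, y, V), then for every η_1 ∈ (0, 1) there exists c* ≥ c_0 such that for all c ≥ c* one has Γ(x(c), y, V) − Γ(y, y, V) ≤ η_1 (Γ(x̂, y, V) − Γ(y, y, V)). -/
open RealInnerProductSpace Finset Filter Topology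

noncomputable section

variable {d l p : ℕ}

/-!
Write `Q_c = L + c Γ` with `L x = g₀ x - ⟪v₀, x - y⟫`. Comparing the minimiser `x(c)` of `Q_c`
with `x̂` and bounding `L (x(c))` from below by the minimum of `Q_{c₀}` gives
`(c - c₀) Γ(x(c)) ≤ K + c Γ(x̂)` for a constant `K`, so `Γ(x(c))` is eventually below any level
strictly above `Γ(x̂)`. Since `Γ(x̂) < Γ(y)` and `η₁ < 1`, the level
`Γ(y) + η₁ (Γ(x̂) - Γ(y))` is such a level.
-/

section PenaltyMinimizers

variable {X : Type*} {A : Set X} {L Γ : X → ℝ}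

theorem sub_mul_le_of_penalty_minimizers {c₀ c : ℝ} {x₀ x z : X}
    (hx₀ : ∀ w ∈ A, L x₀ + c₀ * Γ x₀ ≤ L w + c₀ * Γ w) (hx : x ∈ A)
    (hxz : L x + c * Γ x ≤ L z + c * Γ z) :
    (c - c₀) * Γ x ≤ L z - (L x₀ + c₀ * Γ x₀) + c * Γ z := by
  have := hx₀ x hx
  linarith

theorem eventually_le_of_penalty_minimizers {c₀ : ℝ} {xsel : ℝ → X}
    (hsel : ∀ c ≥ c₀, xsel c ∈ A ∧ ∀ w ∈ A, L (xsel c) + c * Γ (xsel c) ≤ L w + c * Γ w)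
    {z : X} (hz : z ∈ A) {T : ℝ} (hT : Γ z < T) :
    ∀ᶠ c in atTop, Γ (xsel c) ≤ T := by
  set K := L z - (L (xsel c₀) + c₀ * Γ (xsel c₀))
  have hlarge : ∀ᶠ c in atTop, K + c₀ * T ≤ c * (T - Γ z) :=
    (tendsto_id.atTop_mul_const (sub_pos.mpr hT)).eventually_ge_atTop _
  filter_upwards [hlarge, eventually_gt_atTop c₀] with c hc hc₀
  obtain ⟨hxA, hxmin⟩ := hsel c hc₀.le
  have hgap : (c - c₀) * Γ (xsel c) ≤ K + c * Γ z :=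
    sub_mul_le_of_penalty_minimizers (hsel c₀ le_rfl).2 hxA (hxmin z hz)
  have hbound : (c - c₀) * Γ (xsel c) ≤ (c - c₀) * T := by linarith
  exact le_of_mul_le_mul_left hbound (sub_pos.mpr hc₀)

end PenaltyMinimizers

theorem stmt9_general {d l p : ℕ} (A : Set (Euc d)) (g0 h0 : Euc d → ℝ)
    (gI hI : Fin l → Euc d → ℝ) (gE hE : Fin p → Euc d → ℝ)
    (y : Euc d) (V : SubgradTuple h0 hI gE hE y)
    (c0 : ℝ)
    (xhat : Euc d) (hxhatA : xhat ∈ A)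
    (xsel : ℝ → Euc d)
    (hsel : ∀ c ≥ c0, xsel c ∈ A ∧ ∀ z ∈ A, Qfun g0 gI V c (xsel c) ≤ Qfun g0 gI V c z)
    (hlt : Gam gI V xhat < Gam gI V y) :
    ∀ η1 : ℝ, 0 < η1 → η1 < 1 → ∃ cs ≥ c0, ∀ c ≥ cs,
      Gam gI V (xsel c) - Gam gI V y ≤ η1 * (Gam gI V xhat - Gam gI V y) := by
  intro η1 _ hη1
  have hlevel : Gam gI V xhat < Gam gI V y + η1 * (Gam gI V xhat - Gam gI V y) := by
    nlinarith [mul_pos (sub_pos.mpr hη1) (sub_pos.mpr hlt)]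
  obtain ⟨a, ha⟩ := eventually_atTop.mp
    (eventually_le_of_penalty_minimizers (L := fun x => g0 x - ⟪V.v0, x - y⟫) hsel hxhatA hlevel)
  exact ⟨max c0 a, le_max_left _ _, fun c hc => by linarith [ha c (le_of_max_le_right hc)]⟩

theorem stmt9 {d l p : ℕ} (A : Set (Euc d)) (g0 h0 : Euc d → ℝ)
    (gI hI : Fin l → Euc d → ℝ) (gE hE : Fin p → Euc d → ℝ)
    (hA : Convex ℝ A) (hAcl : IsClosed A) (hAne : A.Nonempty)
    (hg0 : ConvexOn ℝ Set.univ g0) (hh0 : ConvexOn ℝ Set.univ h0)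
    (hgI : ∀ i, ConvexOn ℝ Set.univ (gI i)) (hhI : ∀ i, ConvexOn ℝ Set.univ (hI i))
    (hgE : ∀ j, ConvexOn ℝ Set.univ (gE j)) (hhE : ∀ j, ConvexOn ℝ Set.univ (hE j))
    (y : Euc d) (hyA : y ∈ A) (V : SubgradTuple h0 hI gE hE y)
    (c0 : ℝ) (hc0 : 0 < c0)
    (xhat : Euc d) (hxhatA : xhat ∈ A) (hxhat : ∀ z ∈ A, Gam gI V xhat ≤ Gam gI V z)
    (xsel : ℝ → Euc d)
    (hsel : ∀ c ≥ c0, xsel c ∈ A ∧ ∀ z ∈ A, Qfun g0 gI V c (xsel c) ≤ Qfun g0 gI V c z)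
    (hlt : Gam gI V xhat < Gam gI V y) :
    ∀ η1 : ℝ, 0 < η1 → η1 < 1 → ∃ cs ≥ c0, ∀ c ≥ cs,
      Gam gI V (xsel c) - Gam gI V y ≤ η1 * (Gam gI V xhat - Gam gI V y) :=
  stmt9_general A g0 h0 gI hI gE hE y V c0 xhat hxhatA xsel hsel hlt
end
end

section
/- Let y ∈ A, let V be a subgradient tuple at y, let c_0 > 0, let x̂ be a global minimiser of Γ(·, y, V) over A, and suppose that for every c ≥ c_0 a global minimiser x(c) of Q_c(·, y, V) over A is chosen. Then for every η_2 ∈ (0, 1) there exists c* ≥ c_0 such that for all c ≥ c* one has Q_c(x(c), y, V) − Q_c(y, y, V) ≤ η_2 c (Γ(x(c), y, V) − Γ(y, y, V)). -/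
/-!
With `L x = g₀ x - ⟪v₀, x - y⟫`, the function `Q_c = L + c Γ` is a penalty function for
minimising `L` subject to `Γ` being minimal. If `Γ(y)` is already minimal, `Q_c(x(c)) ≤ Q_c(y)`
suffices. Otherwise let `δ = Γ(y) - Γ(x̂) > 0`. The standard penalty comparison shows that
`L(x(c))` is nondecreasing in `c`, so minimality of `x(c)` against `x̂` gives
`c (Γ(x(c)) - Γ(x̂)) ≤ L(x̂) - L(x(c₀))`; hence `Γ(y) - Γ(x(c)) ≥ δ / 2` for large `c`, while
`L(x(c)) - L(y) ≤ L(x̂) - L(y)` stays bounded, and the bounded term is eventually dominated by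
`(1 - η₂) c δ / 2`.
-/

open RealInnerProductSpace Finset Filter Topology

noncomputable section

variable {d l p : ℕ}

section PenaltyMethod

variable {X : Type*} {L G : X → ℝ}

theorem objective_le_of_penalty_minimizers {c₁ c₂ : ℝ} {x₁ x₂ : X} (hc₁ : 0 ≤ c₁)
    (hc : c₁ < c₂) (h₁ : L x₁ + c₁ * G x₁ ≤ L x₂ + c₁ * G x₂)
    (h₂ : L x₂ + c₂ * G x₂ ≤ L x₁ + c₂ * G x₁) : L x₁ ≤ L x₂ := by
  have hsum : (c₂ - c₁) * (G x₂ - G x₁) ≤ 0 := by linarith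
  have hG : G x₂ ≤ G x₁ := by nlinarith
  nlinarith

def IsPenaltyMinimizerPath (L G : X → ℝ) (A : Set X) (c₀ : ℝ) (x : ℝ → X) : Prop :=
  ∀ c ≥ c₀, x c ∈ A ∧ ∀ z ∈ A, L (x c) + c * G (x c) ≤ L z + c * G z

variable {A : Set X} {x : ℝ → X} {c₀ : ℝ}

theorem objective_mono_of_penalty_minimizers (hc₀ : 0 ≤ c₀)
    (hx : IsPenaltyMinimizerPath L G A c₀ x)
    {c : ℝ} (hc : c₀ ≤ c) : L (x c₀) ≤ L (x c) := by
  rcases hc.eq_or_lt with rfl | hlt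
  · exact le_rfl
  · exact objective_le_of_penalty_minimizers hc₀ hlt ((hx c₀ le_rfl).2 _ (hx c hc).1)
      ((hx c hc).2 _ (hx c₀ le_rfl).1)

variable {y xhat : X} {η : ℝ}

theorem penalty_decrease_of_constraint_min (hc₀ : 0 ≤ c₀) (hη : 0 ≤ η) (hy : y ∈ A)
    (hG : ∀ z ∈ A, G y ≤ G z)
    (hx : IsPenaltyMinimizerPath L G A c₀ x)
    {c : ℝ} (hc : c₀ ≤ c) :
    (L (x c) + c * G (x c)) - (L y + c * G y) ≤ η * c * (G (x c) - G y) := by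
  have hdecr := (hx c hc).2 y hy
  have hgap : 0 ≤ η * c * (G (x c) - G y) :=
    mul_nonneg (mul_nonneg hη (hc₀.trans hc)) (sub_nonneg.2 (hG _ (hx c hc).1))
  linarith

theorem exists_penalty_decrease_of_lt (hc₀ : 0 < c₀) (hη : η < 1)
    (hxhat : xhat ∈ A) (hG : ∀ z ∈ A, G xhat ≤ G z) (hδ : G xhat < G y)
    (hx : IsPenaltyMinimizerPath L G A c₀ x) :
    ∃ cs ≥ c₀, ∀ c ≥ cs,
      (L (x c) + c * G (x c)) - (L y + c * G y) ≤ η * c * (G (x c) - G y) := by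
  set δ := G y - G xhat
  have hδ : 0 < δ := sub_pos.2 hδ
  have hηδ : 0 < (1 - η) * δ := mul_pos (sub_pos.2 hη) hδ
  refine ⟨max c₀ (max (2 * (L xhat - L (x c₀)) / δ) (2 * (L xhat - L y) / ((1 - η) * δ))),
    le_max_left _ _, fun c hc => ?_⟩
  simp only [ge_iff_le, max_le_iff] at hc
  obtain ⟨hc₀c, hcK, hcM⟩ := hc
  rw [div_le_iff₀ hδ] at hcK
  rw [div_le_iff₀ hηδ] at hcM
  obtain ⟨hxcA, hxc⟩ := hx c hc₀c
  have hLmono := objective_mono_of_penalty_minimizers hc₀.le hx hc₀c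
  have hQxhat := hxc xhat hxhat
  have hGxc := hG _ hxcA
  have hLxc : L (x c) ≤ L xhat := by nlinarith
  have hGgap : δ / 2 ≤ G y - G (x c) := by nlinarith
  have hLgap : L (x c) - L y ≤ (1 - η) * c * (G y - G (x c)) := by
    nlinarith [mul_le_mul_of_nonneg_left hGgap (sub_pos.2 hη).le]
  linarith

theorem exists_penalty_decrease (hc₀ : 0 < c₀) (hη₀ : 0 ≤ η) (hη₁ : η < 1) (hy : y ∈ A)
    (hxhat : xhat ∈ A) (hG : ∀ z ∈ A, G xhat ≤ G z)
    (hx : IsPenaltyMinimizerPath L G A c₀ x) :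
    ∃ cs ≥ c₀, ∀ c ≥ cs,
      (L (x c) + c * G (x c)) - (L y + c * G y) ≤ η * c * (G (x c) - G y) := by
  rcases (hG y hy).eq_or_lt with hGy | hδ
  · refine ⟨c₀, le_rfl, fun c hc => penalty_decrease_of_constraint_min hc₀.le hη₀ hy ?_ hx hc⟩
    exact fun z hz => hGy ▸ hG z hz
  · exact exists_penalty_decrease_of_lt hc₀ hη₁ hxhat hG hδ hx

end PenaltyMethod

theorem stmt10_general {d l p : ℕ} (A : Set (Euc d)) (g0 h0 : Euc d → ℝ)
    (gI hI : Fin l → Euc d → ℝ) (gE hE : Fin p → Euc d → ℝ)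
    (y : Euc d) (hyA : y ∈ A) (V : SubgradTuple h0 hI gE hE y)
    (c0 : ℝ) (hc0 : 0 < c0)
    (xhat : Euc d) (hxhatA : xhat ∈ A) (hxhat : ∀ z ∈ A, Gam gI V xhat ≤ Gam gI V z)
    (xsel : ℝ → Euc d)
    (hsel : ∀ c ≥ c0, xsel c ∈ A ∧ ∀ z ∈ A, Qfun g0 gI V c (xsel c) ≤ Qfun g0 gI V c z) :
    ∀ η2 : ℝ, 0 < η2 → η2 < 1 → ∃ cs ≥ c0, ∀ c ≥ cs,
      Qfun g0 gI V c (xsel c) - Qfun g0 gI V c y ≤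
        η2 * c * (Gam gI V (xsel c) - Gam gI V y) := fun _ hη₀ hη₁ =>
  exists_penalty_decrease (L := fun x => g0 x - ⟪V.v0, x - y⟫) (G := Gam gI V)
    hc0 hη₀.le hη₁ hyA hxhatA hxhat hsel

theorem stmt10 {d l p : ℕ} (A : Set (Euc d)) (g0 h0 : Euc d → ℝ)
    (gI hI : Fin l → Euc d → ℝ) (gE hE : Fin p → Euc d → ℝ)
    (hA : Convex ℝ A) (hAcl : IsClosed A) (hAne : A.Nonempty)
    (hg0 : ConvexOn ℝ Set.univ g0) (hh0 : ConvexOn ℝ Set.univ h0)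
    (hgI : ∀ i, ConvexOn ℝ Set.univ (gI i)) (hhI : ∀ i, ConvexOn ℝ Set.univ (hI i))
    (hgE : ∀ j, ConvexOn ℝ Set.univ (gE j)) (hhE : ∀ j, ConvexOn ℝ Set.univ (hE j))
    (y : Euc d) (hyA : y ∈ A) (V : SubgradTuple h0 hI gE hE y)
    (c0 : ℝ) (hc0 : 0 < c0)
    (xhat : Euc d) (hxhatA : xhat ∈ A) (hxhat : ∀ z ∈ A, Gam gI V xhat ≤ Gam gI V z)
    (xsel : ℝ → Euc d)
    (hsel : ∀ c ≥ c0, xsel c ∈ A ∧ ∀ z ∈ A, Qfun g0 gI V c (xsel c) ≤ Qfun g0 gI V c z) :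
    ∀ η2 : ℝ, 0 < η2 → η2 < 1 → ∃ cs ≥ c0, ∀ c ≥ cs,
      Qfun g0 gI V c (xsel c) - Qfun g0 gI V c y ≤
        η2 * c * (Gam gI V (xsel c) - Gam gI V y) :=
  stmt10_general A g0 h0 gI hI gE hE y hyA V c0 hc0 xhat hxhatA hxhat xsel hsel
end
end
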